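/- arXiv:1503.01585 — 3 statements merged into one kernel-verified Lean document; each statement's English description precedes it below -/
import Mathlib

section
/- Under the standing iterated-preunit hypotheses, let i_{A⊗V}, p_{A⊗V} split ∇_{A⊗V} with image A×V, let i_{A⊗V⊗W}, p_{A⊗V⊗W} split ∇_{A⊗V⊗W} with image A×(V⊗W), and let i_{(A×V)⊗W}, p_{(A×V)⊗W} split the idempotent ∇_{(A×V)⊗W} = (p_{A⊗V}⊗W)∘∇_{A⊗V⊗W}∘(i_{A⊗V}⊗W) with image (A×V)×W. Then the morphism ω = p_{A⊗V⊗W}∘(i_{A⊗V}⊗W)∘i_{(A×V)⊗W} : (A×V)×W → A×(V⊗W) is an isomorphism with inverse ω⁻¹ = p_{(A×V)⊗W}∘(p_{A⊗V}⊗W)∘i_{A⊗V⊗W}. -/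
/-!
Since `ω` and `ω⁻¹` are assembled from splittings, `ω⁻¹ ∘ ω` and `ω ∘ ω⁻¹` reduce to
`∇_{A⊗V⊗W}` flanked by `∇_{A⊗V} ⊗ W`, and it suffices that
`∇_{A⊗V⊗W} ∘ (∇_{A⊗V} ⊗ W) = ∇_{A⊗V⊗W} = (∇_{A⊗V} ⊗ W) ∘ ∇_{A⊗V⊗W}`.
Every `∇` is the left `A`-linear extension of `ψ ∘ (- ⊗ η_A)`, and these extensions compose
like Kleisli morphisms. The second identity then comes from `∇_{A⊗V} ∘ ψ_V = ψ_V`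
(compatibility and the right unit law); for the first, the link condition factors
`∇_{A⊗V⊗W}` through the idempotent of `(ψ_V ⊗ W) ∘ (V ⊗ ψ_W)`, which absorbs
`∇_{A⊗V} ⊗ W` by compatibility and the left unit law.
-/

open CategoryTheory MonoidalCategory

namespace IteratedWCP

universe v u

variable {C : Type u} [Category.{v} C] [MonoidalCategory C]

/-- The monoid (algebra) axioms for `(A, η, μ)`. -/
def IsMonoid {A : C} (η : 𝟙_ C ⟶ A) (μ : A ⊗ A ⟶ A) : Prop :=
  (η ▷ A) ≫ μ = (λ_ A).hom ∧ (A ◁ η) ≫ μ = (ρ_ A).hom ∧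
    (μ ▷ A) ≫ μ = (α_ A A A).hom ≫ (A ◁ μ) ≫ μ

/-- The compatibility condition
`(μ_A ⊗ V) ∘ (A ⊗ ψ) ∘ (ψ ⊗ A) = ψ ∘ (V ⊗ μ_A)`. -/
def Compat {A V : C} (μ : A ⊗ A ⟶ A) (ψ : V ⊗ A ⟶ A ⊗ V) : Prop :=
  (ψ ▷ A) ≫ (α_ A V A).hom ≫ (A ◁ ψ) ≫ (α_ A A V).inv ≫ (μ ▷ V)
    = (α_ V A A).hom ≫ (V ◁ μ) ≫ ψ

/-- The idempotent `∇_{A⊗V} = (μ_A ⊗ V) ∘ (A ⊗ ψ) ∘ (A ⊗ V ⊗ η_A)`. -/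
def nabla {A V : C} (η : 𝟙_ C ⟶ A) (μ : A ⊗ A ⟶ A) (ψ : V ⊗ A ⟶ A ⊗ V) :
    A ⊗ V ⟶ A ⊗ V :=
  (ρ_ (A ⊗ V)).inv ≫ ((A ⊗ V) ◁ η) ≫ (α_ A V A).hom ≫ (A ◁ ψ) ≫
    (α_ A A V).inv ≫ (μ ▷ V)

/-- The twisted condition
`(μ_A ⊗ V) ∘ (A ⊗ ψ) ∘ (σ ⊗ A) = (μ_A ⊗ V) ∘ (A ⊗ σ) ∘ (ψ ⊗ V) ∘ (V ⊗ ψ)`. -/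
def Twisted {A V : C} (μ : A ⊗ A ⟶ A) (ψ : V ⊗ A ⟶ A ⊗ V)
    (σ : V ⊗ V ⟶ A ⊗ V) : Prop :=
  (σ ▷ A) ≫ (α_ A V A).hom ≫ (A ◁ ψ) ≫ (α_ A A V).inv ≫ (μ ▷ V)
    = (α_ V V A).hom ≫ (V ◁ ψ) ≫ (α_ V A V).inv ≫ (ψ ▷ V) ≫ (α_ A V V).hom ≫
        (A ◁ σ) ≫ (α_ A A V).inv ≫ (μ ▷ V)

/-- The cocycle condition
`(μ_A ⊗ V) ∘ (A ⊗ σ) ∘ (σ ⊗ V) = (μ_A ⊗ V) ∘ (A ⊗ σ) ∘ (ψ ⊗ V) ∘ (V ⊗ σ)`. -/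
def Cocycle {A V : C} (μ : A ⊗ A ⟶ A) (ψ : V ⊗ A ⟶ A ⊗ V)
    (σ : V ⊗ V ⟶ A ⊗ V) : Prop :=
  (σ ▷ V) ≫ (α_ A V V).hom ≫ (A ◁ σ) ≫ (α_ A A V).inv ≫ (μ ▷ V)
    = (α_ V V V).hom ≫ (V ◁ σ) ≫ (α_ V A V).inv ≫ (ψ ▷ V) ≫ (α_ A V V).hom ≫
        (A ◁ σ) ≫ (α_ A A V).inv ≫ (μ ▷ V)

/-- Normalization : `∇_{A⊗V} ∘ σ = σ`. -/
def Normalized {A V : C} (η : 𝟙_ C ⟶ A) (μ : A ⊗ A ⟶ A) (ψ : V ⊗ A ⟶ A ⊗ V)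
    (σ : V ⊗ V ⟶ A ⊗ V) : Prop :=
  σ ≫ nabla η μ ψ = σ

/-- `(ψ_V ⊗ W) ∘ (V ⊗ ψ_W) : (V ⊗ W) ⊗ A ⟶ A ⊗ (V ⊗ W)`. -/
def psi2 {A V W : C} (ψV : V ⊗ A ⟶ A ⊗ V) (ψW : W ⊗ A ⟶ A ⊗ W) :
    (V ⊗ W) ⊗ A ⟶ A ⊗ (V ⊗ W) :=
  (α_ V W A).hom ≫ (V ◁ ψW) ≫ (α_ V A W).inv ≫ (ψV ▷ W) ≫ (α_ A V W).hom

/-- `ψ_{V⊗W} = (ψ_V ⊗ W) ∘ (V ⊗ ψ_W) ∘ (Δ ⊗ A)`. -/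
def psiVW {A V W : C} (ψV : V ⊗ A ⟶ A ⊗ V) (ψW : W ⊗ A ⟶ A ⊗ W)
    (Δ : V ⊗ W ⟶ V ⊗ W) : (V ⊗ W) ⊗ A ⟶ A ⊗ (V ⊗ W) :=
  (Δ ▷ A) ≫ psi2 ψV ψW

/-- `Δ` is a link morphism:
`ψ_{V⊗W} = (A ⊗ Δ) ∘ ψ_{V⊗W}` and `ψ_{V⊗W} = ∇_{A⊗V⊗W} ∘ (ψ_V ⊗ W) ∘ (V ⊗ ψ_W)`. -/
def IsLink {A V W : C} (η : 𝟙_ C ⟶ A) (μ : A ⊗ A ⟶ A)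
    (ψV : V ⊗ A ⟶ A ⊗ V) (ψW : W ⊗ A ⟶ A ⊗ W) (Δ : V ⊗ W ⟶ V ⊗ W) : Prop :=
  psiVW ψV ψW Δ = psiVW ψV ψW Δ ≫ (A ◁ Δ) ∧
  psiVW ψV ψW Δ = psi2 ψV ψW ≫ nabla η μ (psiVW ψV ψW Δ)

/-- The final multiplication step `(μ_A ⊗ V ⊗ W)` on `A ⊗ ((A ⊗ V) ⊗ W)`. -/
def muPart (V W : C) {A : C} (μ : A ⊗ A ⟶ A) :
    A ⊗ ((A ⊗ V) ⊗ W) ⟶ A ⊗ (V ⊗ W) :=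
  (A ◁ (α_ A V W).hom) ≫ (α_ A A (V ⊗ W)).inv ≫ (μ ▷ (V ⊗ W))

/-- Condition (i) of the definition of a twisting morphism:
`(ψ_V ⊗ W) ∘ (V ⊗ ψ_W) ∘ (τ ⊗ A) = (A ⊗ τ) ∘ (ψ_W ⊗ V) ∘ (W ⊗ ψ_V)`. -/
def TwistI {A V W : C} (ψV : V ⊗ A ⟶ A ⊗ V) (ψW : W ⊗ A ⟶ A ⊗ W)
    (τ : W ⊗ V ⟶ V ⊗ W) : Prop :=
  (τ ▷ A) ≫ psi2 ψV ψW
    = (α_ W V A).hom ≫ (W ◁ ψV) ≫ (α_ W A V).inv ≫ (ψW ▷ V) ≫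
        (α_ A W V).hom ≫ (A ◁ τ)

/-- Condition (ii) of the definition of a twisting morphism. -/
def TwistII {A V W : C} (μ : A ⊗ A ⟶ A) (ψV : V ⊗ A ⟶ A ⊗ V)
    (σV : V ⊗ V ⟶ A ⊗ V) (ψW : W ⊗ A ⟶ A ⊗ W) (σW : W ⊗ W ⟶ A ⊗ W)
    (τ : W ⊗ V ⟶ V ⊗ W) : Prop :=
  ((τ ▷ W) ▷ V) ≫ ((α_ V W W).hom ▷ V) ≫ ((V ◁ σW) ▷ V) ≫
      ((α_ V A W).inv ▷ V) ≫ (α_ (V ⊗ A) W V).hom ≫ (ψV ⊗ₘ τ) ≫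
      (α_ A V (V ⊗ W)).hom ≫ (A ◁ (α_ V V W).inv) ≫ (A ◁ (σV ▷ W)) ≫ muPart V W μ
    = (α_ (W ⊗ V) W V).hom ≫ ((W ⊗ V) ◁ τ) ≫ (α_ W V (V ⊗ W)).hom ≫
        (W ◁ (α_ V V W).inv) ≫ (W ◁ (σV ▷ W)) ≫ (W ◁ (α_ A V W).hom) ≫
        (α_ W A (V ⊗ W)).inv ≫ (ψW ▷ (V ⊗ W)) ≫ (α_ A W (V ⊗ W)).hom ≫
        (A ◁ (α_ W V W).inv) ≫ (A ◁ (τ ▷ W)) ≫ (A ◁ (α_ V W W).hom) ≫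
        (A ◁ (V ◁ σW)) ≫ (A ◁ (α_ V A W).inv) ≫ (A ◁ (ψV ▷ W)) ≫ muPart V W μ

/-- `σ_{V⊗W} = (μ_A ⊗ V ⊗ W) ∘ (A ⊗ ψ_V ⊗ W) ∘ (σ_V ⊗ σ_W) ∘ (V ⊗ τ ⊗ W)`. -/
def sigmaVW {A V W : C} (μ : A ⊗ A ⟶ A) (ψV : V ⊗ A ⟶ A ⊗ V)
    (σV : V ⊗ V ⟶ A ⊗ V) (σW : W ⊗ W ⟶ A ⊗ W) (τ : W ⊗ V ⟶ V ⊗ W) :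
    (V ⊗ W) ⊗ (V ⊗ W) ⟶ A ⊗ (V ⊗ W) :=
  (α_ V W (V ⊗ W)).hom ≫ (V ◁ (α_ W V W).inv) ≫ (V ◁ (τ ▷ W)) ≫
    (V ◁ (α_ V W W).hom) ≫ (α_ V V (W ⊗ W)).inv ≫ (σV ⊗ₘ σW) ≫
    (α_ A V (A ⊗ W)).hom ≫ (A ◁ (α_ V A W).inv) ≫ (A ◁ (ψV ▷ W)) ≫ muPart V W μ

/-- The three σ-compatibility conditions for `σ_{V⊗W}` and a link morphism `Δ`. -/
def SigmaCompat {A V W : C} (Δ : V ⊗ W ⟶ V ⊗ W)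
    (σ : (V ⊗ W) ⊗ (V ⊗ W) ⟶ A ⊗ (V ⊗ W)) : Prop :=
  σ = (Δ ▷ (V ⊗ W)) ≫ σ ∧ σ = ((V ⊗ W) ◁ Δ) ≫ σ ∧ σ = σ ≫ (A ◁ Δ)

/-- The weak crossed product multiplication
`μ_{A⊗V} = (μ_A ⊗ V) ∘ (μ_A ⊗ σ) ∘ (A ⊗ ψ ⊗ V)`. -/
def wmul {A V : C} (μ : A ⊗ A ⟶ A) (ψ : V ⊗ A ⟶ A ⊗ V) (σ : V ⊗ V ⟶ A ⊗ V) :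
    (A ⊗ V) ⊗ (A ⊗ V) ⟶ A ⊗ V :=
  (α_ A V (A ⊗ V)).hom ≫ (A ◁ (α_ V A V).inv) ≫ (A ◁ (ψ ▷ V)) ≫
    (A ◁ (α_ A V V).hom) ≫ (α_ A A (V ⊗ V)).inv ≫ (μ ⊗ₘ σ) ≫
    (α_ A A V).inv ≫ (μ ▷ V)

/-- `β_ν = (μ_A ⊗ V) ∘ (A ⊗ ν)`. -/
def beta {A V : C} (μ : A ⊗ A ⟶ A) (ν : 𝟙_ C ⟶ A ⊗ V) : A ⟶ A ⊗ V :=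
  (ρ_ A).inv ≫ (A ◁ ν) ≫ (α_ A A V).inv ≫ (μ ▷ V)

/-- Preunit equation (1):
`(μ_A ⊗ V) ∘ (A ⊗ σ) ∘ (ψ ⊗ V) ∘ (V ⊗ ν) = ∇_{A⊗V} ∘ (η_A ⊗ V)`. -/
def PreEq1 {A V : C} (η : 𝟙_ C ⟶ A) (μ : A ⊗ A ⟶ A) (ψ : V ⊗ A ⟶ A ⊗ V)
    (σ : V ⊗ V ⟶ A ⊗ V) (ν : 𝟙_ C ⟶ A ⊗ V) : Prop :=
  (ρ_ V).inv ≫ (V ◁ ν) ≫ (α_ V A V).inv ≫ (ψ ▷ V) ≫ (α_ A V V).hom ≫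
      (A ◁ σ) ≫ (α_ A A V).inv ≫ (μ ▷ V)
    = (λ_ V).inv ≫ (η ▷ V) ≫ nabla η μ ψ

/-- Preunit equation (2):
`(μ_A ⊗ V) ∘ (A ⊗ σ) ∘ (ν ⊗ V) = ∇_{A⊗V} ∘ (η_A ⊗ V)`. -/
def PreEq2 {A V : C} (η : 𝟙_ C ⟶ A) (μ : A ⊗ A ⟶ A) (ψ : V ⊗ A ⟶ A ⊗ V)
    (σ : V ⊗ V ⟶ A ⊗ V) (ν : 𝟙_ C ⟶ A ⊗ V) : Prop :=
  (λ_ V).inv ≫ (ν ▷ V) ≫ (α_ A V V).hom ≫ (A ◁ σ) ≫ (α_ A A V).inv ≫ (μ ▷ V)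
    = (λ_ V).inv ≫ (η ▷ V) ≫ nabla η μ ψ

/-- Preunit equation (3):
`(μ_A ⊗ V) ∘ (A ⊗ ψ) ∘ (ν ⊗ A) = β_ν`. -/
def PreEq3 {A V : C} (μ : A ⊗ A ⟶ A) (ψ : V ⊗ A ⟶ A ⊗ V)
    (ν : 𝟙_ C ⟶ A ⊗ V) : Prop :=
  (λ_ A).inv ≫ (ν ▷ A) ≫ (α_ A V A).hom ≫ (A ◁ ψ) ≫ (α_ A A V).inv ≫ (μ ▷ V)
    = beta μ ν

/-- `ν` is a preunit for the associative product `m` :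
`m ∘ (X ⊗ ν) = m ∘ (ν ⊗ X) = m ∘ (X ⊗ (m ∘ (ν ⊗ ν)))`. -/
def IsPreunit {X : C} (m : X ⊗ X ⟶ X) (ν : 𝟙_ C ⟶ X) : Prop :=
  (ρ_ X).inv ≫ (X ◁ ν) ≫ m = (λ_ X).inv ≫ (ν ▷ X) ≫ m ∧
  (λ_ X).inv ≫ (ν ▷ X) ≫ m
    = (ρ_ X).inv ≫ (X ◁ ((λ_ (𝟙_ C)).inv ≫ (ν ⊗ₘ ν) ≫ m)) ≫ m

/-- `ν_{V⊗W} = ∇_{A⊗V⊗W} ∘ (μ_A ⊗ V ⊗ W) ∘ (A ⊗ ψ_V ⊗ W) ∘ (ν_V ⊗ ν_W)`. -/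
def nuVW {A V W : C} (η : 𝟙_ C ⟶ A) (μ : A ⊗ A ⟶ A) (ψV : V ⊗ A ⟶ A ⊗ V)
    (ψW : W ⊗ A ⟶ A ⊗ W) (Δ : V ⊗ W ⟶ V ⊗ W)
    (νV : 𝟙_ C ⟶ A ⊗ V) (νW : 𝟙_ C ⟶ A ⊗ W) : 𝟙_ C ⟶ A ⊗ (V ⊗ W) :=
  (λ_ (𝟙_ C)).inv ≫ (νV ⊗ₘ νW) ≫ (α_ A V (A ⊗ W)).hom ≫ (A ◁ (α_ V A W).inv) ≫
    (A ◁ (ψV ▷ W)) ≫ muPart V W μ ≫ nabla η μ (psiVW ψV ψW Δ)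

/-- Iterated preunit condition (pre-1):
`(μ_A⊗V⊗W)∘(A⊗σ_V⊗W)∘(ψ_V⊗τ)∘(V⊗ψ_W⊗V)∘(Δ⊗ν_V) = ∇_{A⊗V⊗W}∘(η_A⊗V⊗W)`. -/
def IterPre1 {A V W : C} (η : 𝟙_ C ⟶ A) (μ : A ⊗ A ⟶ A)
    (ψV : V ⊗ A ⟶ A ⊗ V) (σV : V ⊗ V ⟶ A ⊗ V) (ψW : W ⊗ A ⟶ A ⊗ W)
    (τ : W ⊗ V ⟶ V ⊗ W) (Δ : V ⊗ W ⟶ V ⊗ W) (νV : 𝟙_ C ⟶ A ⊗ V) : Prop :=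
  (ρ_ (V ⊗ W)).inv ≫ (Δ ⊗ₘ νV) ≫ (α_ V W (A ⊗ V)).hom ≫ (V ◁ (α_ W A V).inv) ≫
      (V ◁ (ψW ▷ V)) ≫ (V ◁ (α_ A W V).hom) ≫ (α_ V A (W ⊗ V)).inv ≫ (ψV ⊗ₘ τ) ≫
      (α_ A V (V ⊗ W)).hom ≫ (A ◁ (α_ V V W).inv) ≫ (A ◁ (σV ▷ W)) ≫ muPart V W μ
    = (λ_ (V ⊗ W)).inv ≫ (η ▷ (V ⊗ W)) ≫ nabla η μ (psiVW ψV ψW Δ)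

/-- Iterated preunit condition (pre-2):
`(μ_A⊗V⊗W)∘(A⊗ψ_V⊗W)∘(A⊗V⊗σ_W)∘(A⊗τ⊗W)∘(ν_W⊗V⊗W) = ∇_{A⊗V⊗W}∘(η_A⊗V⊗W)`. -/
def IterPre2 {A V W : C} (η : 𝟙_ C ⟶ A) (μ : A ⊗ A ⟶ A)
    (ψV : V ⊗ A ⟶ A ⊗ V) (ψW : W ⊗ A ⟶ A ⊗ W) (σW : W ⊗ W ⟶ A ⊗ W)
    (τ : W ⊗ V ⟶ V ⊗ W) (Δ : V ⊗ W ⟶ V ⊗ W) (νW : 𝟙_ C ⟶ A ⊗ W) : Prop :=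
  (λ_ (V ⊗ W)).inv ≫ (νW ▷ (V ⊗ W)) ≫ (α_ A W (V ⊗ W)).hom ≫
      (A ◁ (α_ W V W).inv) ≫ (A ◁ (τ ▷ W)) ≫ (A ◁ (α_ V W W).hom) ≫
      (A ◁ (V ◁ σW)) ≫ (A ◁ (α_ V A W).inv) ≫ (A ◁ (ψV ▷ W)) ≫ muPart V W μ
    = (λ_ (V ⊗ W)).inv ≫ (η ▷ (V ⊗ W)) ≫ nabla η μ (psiVW ψV ψW Δ)

/-- `i_{A×V} = p_{A⊗V⊗W} ∘ (μ_A⊗V⊗W) ∘ (A⊗ψ_V⊗W) ∘ (i_{A⊗V} ⊗ ν_W)`. -/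
def iAV {A V W X Z : C} (μ : A ⊗ A ⟶ A) (ψV : V ⊗ A ⟶ A ⊗ V)
    (νW : 𝟙_ C ⟶ A ⊗ W) (iX : X ⟶ A ⊗ V) (p2 : A ⊗ (V ⊗ W) ⟶ Z) : X ⟶ Z :=
  (ρ_ X).inv ≫ (iX ⊗ₘ νW) ≫ (α_ A V (A ⊗ W)).hom ≫ (A ◁ (α_ V A W).inv) ≫
    (A ◁ (ψV ▷ W)) ≫ muPart V W μ ≫ p2

/-- `i_W = p_{A⊗V⊗W} ∘ (ν_V ⊗ W)`. -/
def iWmor {A V W Z : C} (νV : 𝟙_ C ⟶ A ⊗ V) (p2 : A ⊗ (V ⊗ W) ⟶ Z) : W ⟶ Z :=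
  (λ_ W).inv ≫ (νV ▷ W) ≫ (α_ A V W).hom ≫ p2

/-- `∇_{(A×V)⊗W} = (p_{A⊗V} ⊗ W) ∘ ∇_{A⊗V⊗W} ∘ (i_{A⊗V} ⊗ W)`. -/
def nabPrime {A V W X : C} (η : 𝟙_ C ⟶ A) (μ : A ⊗ A ⟶ A)
    (ψV : V ⊗ A ⟶ A ⊗ V) (ψW : W ⊗ A ⟶ A ⊗ W) (Δ : V ⊗ W ⟶ V ⊗ W)
    (iX : X ⟶ A ⊗ V) (pX : A ⊗ V ⟶ X) : X ⊗ W ⟶ X ⊗ W :=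
  (iX ▷ W) ≫ (α_ A V W).hom ≫ nabla η μ (psiVW ψV ψW Δ) ≫
    (α_ A V W).inv ≫ (pX ▷ W)

/-- Equality (new-it-1). -/
def NewIt1 {A V W : C} (η : 𝟙_ C ⟶ A) (μ : A ⊗ A ⟶ A)
    (ψV : V ⊗ A ⟶ A ⊗ V) (σV : V ⊗ V ⟶ A ⊗ V) (ψW : W ⊗ A ⟶ A ⊗ W)
    (τ : W ⊗ V ⟶ V ⊗ W) (Δ : V ⊗ W ⟶ V ⊗ W) (νW : 𝟙_ C ⟶ A ⊗ W) : Prop :=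
  (ρ_ (V ⊗ V)).inv ≫ ((V ⊗ V) ◁ νW) ≫ (α_ (V ⊗ V) A W).inv ≫
      (((σV ▷ A) ≫ (α_ A V A).hom ≫ (A ◁ ψV) ≫ (α_ A A V).inv ≫ (μ ▷ V)) ▷ W) ≫
      (α_ A V W).hom ≫ nabla η μ (psiVW ψV ψW Δ)
    = ((ρ_ V).inv ▷ V) ≫ ((V ◁ νW) ▷ V) ≫ ((α_ V A W).inv ▷ V) ≫
        (α_ (V ⊗ A) W V).hom ≫ (ψV ⊗ₘ τ) ≫ (α_ A V (V ⊗ W)).hom ≫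
        (A ◁ (α_ V V W).inv) ≫ (A ◁ (σV ▷ W)) ≫ muPart V W μ ≫
        nabla η μ (psiVW ψV ψW Δ)

/-- Equality (new-it-2). -/
def NewIt2 {A V W : C} (η : 𝟙_ C ⟶ A) (μ : A ⊗ A ⟶ A)
    (ψV : V ⊗ A ⟶ A ⊗ V) (σV : V ⊗ V ⟶ A ⊗ V) (ψW : W ⊗ A ⟶ A ⊗ W)
    (Δ : V ⊗ W ⟶ V ⊗ W) : Prop :=
  (σV ▷ W) ≫ (α_ A V W).hom ≫ nabla η μ (psiVW ψV ψW Δ)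
    = (α_ V V W).hom ≫ (V ◁ Δ) ≫ (ρ_ (V ⊗ (V ⊗ W))).inv ≫
        ((V ⊗ (V ⊗ W)) ◁ η) ≫ (α_ V (V ⊗ W) A).hom ≫ (V ◁ (α_ V W A).hom) ≫
        (α_ V V (W ⊗ A)).inv ≫ (σV ⊗ₘ ψW) ≫ (α_ A V (A ⊗ W)).hom ≫
        (A ◁ (α_ V A W).inv) ≫ (A ◁ (ψV ▷ W)) ≫ muPart V W μ

/-- Equality (new-it-3). -/
def NewIt3 {A V W : C} (η : 𝟙_ C ⟶ A) (μ : A ⊗ A ⟶ A)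
    (ψV : V ⊗ A ⟶ A ⊗ V) (ψW : W ⊗ A ⟶ A ⊗ W) (σW : W ⊗ W ⟶ A ⊗ W)
    (Δ : V ⊗ W ⟶ V ⊗ W) : Prop :=
  (V ◁ σW) ≫ (α_ V A W).inv ≫ (ψV ▷ W) ≫ (α_ A V W).hom ≫
      nabla η μ (psiVW ψV ψW Δ)
    = (α_ V W W).inv ≫ (Δ ▷ W) ≫ (α_ V W W).hom ≫ (V ◁ σW) ≫
        (α_ V A W).inv ≫ (ψV ▷ W) ≫ (α_ A V W).hom

/-- A weak distributive law of the monoid `S` over the monoid `T`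
(`lam : T ⊗ S ⟶ S ⊗ T`). -/
def WDL {T S : C} (ηT : 𝟙_ C ⟶ T) (μT : T ⊗ T ⟶ T) (ηS : 𝟙_ C ⟶ S)
    (μS : S ⊗ S ⟶ S) (lam : T ⊗ S ⟶ S ⊗ T) : Prop :=
  ((μT ▷ S) ≫ lam
      = (α_ T T S).hom ≫ (T ◁ lam) ≫ (α_ T S T).inv ≫ (lam ▷ T) ≫
          (α_ S T T).hom ≫ (S ◁ μT)) ∧
  ((T ◁ μS) ≫ lam
      = (α_ T S S).inv ≫ (lam ▷ S) ≫ (α_ S T S).hom ≫ (S ◁ lam) ≫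
          (α_ S S T).inv ≫ (μS ▷ T)) ∧
  ((((λ_ S).inv ≫ (ηT ▷ S) ≫ lam) ▷ T) ≫ (α_ S T T).hom ≫ (S ◁ μT)
      = (S ◁ ((ρ_ T).inv ≫ (T ◁ ηS) ≫ lam)) ≫ (α_ S S T).inv ≫ (μS ▷ T))

/-- The Yang–Baxter relation
`(S⊗λ2)∘(λ3⊗T)∘(D⊗λ1) = (λ1⊗D)∘(T⊗λ3)∘(λ2⊗S)`. -/
def YB {S T D : C} (l1 : T ⊗ S ⟶ S ⊗ T) (l2 : D ⊗ T ⟶ T ⊗ D)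
    (l3 : D ⊗ S ⟶ S ⊗ D) : Prop :=
  (α_ D T S).hom ≫ (D ◁ l1) ≫ (α_ D S T).inv ≫ (l3 ▷ T) ≫
      (α_ S D T).hom ≫ (S ◁ l2)
    = (l2 ▷ S) ≫ (α_ T D S).hom ≫ (T ◁ l3) ≫ (α_ T S D).inv ≫
        (l1 ▷ D) ≫ (α_ S T D).hom

/-- `σ_T = (S ⊗ μ_T) ∘ ((λ ∘ (T ⊗ η_S)) ⊗ T)`. -/
def sigWDL {S T : C} (ηS : 𝟙_ C ⟶ S) (μT : T ⊗ T ⟶ T)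
    (lam : T ⊗ S ⟶ S ⊗ T) : T ⊗ T ⟶ S ⊗ T :=
  (((ρ_ T).inv ≫ (T ◁ ηS) ≫ lam) ▷ T) ≫ (α_ S T T).hom ≫ (S ◁ μT)

/-- `∇_{S⊗T} = (μ_S ⊗ T) ∘ (S ⊗ (λ ∘ (T ⊗ η_S)))`. -/
def nabWDL {S T : C} (ηS : 𝟙_ C ⟶ S) (μS : S ⊗ S ⟶ S)
    (lam : T ⊗ S ⟶ S ⊗ T) : S ⊗ T ⟶ S ⊗ T :=
  (S ◁ ((ρ_ T).inv ≫ (T ◁ ηS) ≫ lam)) ≫ (α_ S S T).inv ≫ (μS ▷ T)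


/-- The extension `(μ ⊗ X) ∘ (A ⊗ k)` of `k : X ⟶ A ⊗ X` to a left `A`-linear endomorphism
of `A ⊗ X`. -/
def kleisliLift {A : C} (μ : A ⊗ A ⟶ A) {X : C} (k : X ⟶ A ⊗ X) : A ⊗ X ⟶ A ⊗ X :=
  (A ◁ k) ≫ (α_ A A X).inv ≫ (μ ▷ X)

def psiUnit {A V : C} (η : 𝟙_ C ⟶ A) (ψ : V ⊗ A ⟶ A ⊗ V) : V ⟶ A ⊗ V :=
  (ρ_ V).inv ≫ (V ◁ η) ≫ ψ

def nablaWhiskerRight {A V : C} (η : 𝟙_ C ⟶ A) (μ : A ⊗ A ⟶ A) (ψ : V ⊗ A ⟶ A ⊗ V)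
    (W : C) : A ⊗ (V ⊗ W) ⟶ A ⊗ (V ⊗ W) :=
  (α_ A V W).inv ≫ (nabla η μ ψ ▷ W) ≫ (α_ A V W).hom

section KleisliLift

variable {A : C} {η : 𝟙_ C ⟶ A} {μ : A ⊗ A ⟶ A}

lemma kleisliLift_comp (hA : IsMonoid η μ) {X : C} (k₁ k₂ : X ⟶ A ⊗ X) :
    kleisliLift μ k₁ ≫ kleisliLift μ k₂ = kleisliLift μ (k₁ ≫ kleisliLift μ k₂) := by
  simp only [kleisliLift, MonoidalCategory.whiskerLeft_comp, Category.assoc]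
  rw [← whisker_exchange_assoc]
  calc (A ◁ k₁) ≫ (α_ A A X).inv ≫ ((A ⊗ A) ◁ k₂) ≫ (μ ▷ (A ⊗ X)) ≫
        (α_ A A X).inv ≫ (μ ▷ X)
      = (A ◁ k₁) ≫ (α_ A A X).inv ≫ ((A ⊗ A) ◁ k₂) ≫ (α_ (A ⊗ A) A X).inv ≫
        (((μ ▷ A) ≫ μ) ▷ X) := by
        simp only [comp_whiskerRight]; monoidal
    _ = (A ◁ k₁) ≫ (α_ A A X).inv ≫ ((A ⊗ A) ◁ k₂) ≫ (α_ (A ⊗ A) A X).inv ≫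
        (((α_ A A A).hom ≫ (A ◁ μ) ≫ μ) ▷ X) := by rw [hA.2.2]
    _ = (A ◁ k₁) ≫ (A ◁ (A ◁ k₂)) ≫ (A ◁ (α_ A A X).inv) ≫ (A ◁ (μ ▷ X)) ≫
        (α_ A A X).inv ≫ (μ ▷ X) := by
        simp only [comp_whiskerRight]; monoidal

lemma nabla_eq_kleisliLift {V : C} (η : 𝟙_ C ⟶ A) (μ : A ⊗ A ⟶ A)
    (ψ : V ⊗ A ⟶ A ⊗ V) : nabla η μ ψ = kleisliLift μ (psiUnit η ψ) := by
  simp only [nabla, kleisliLift, psiUnit, MonoidalCategory.whiskerLeft_comp, Category.assoc]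
  monoidal

lemma nablaWhiskerRight_eq_kleisliLift {V : C} (η : 𝟙_ C ⟶ A) (μ : A ⊗ A ⟶ A)
    (ψ : V ⊗ A ⟶ A ⊗ V) (W : C) :
    nablaWhiskerRight η μ ψ W = kleisliLift μ ((psiUnit η ψ ▷ W) ≫ (α_ A V W).hom) := by
  simp only [nablaWhiskerRight, nabla_eq_kleisliLift, kleisliLift, comp_whiskerRight,
    MonoidalCategory.whiskerLeft_comp, Category.assoc]
  monoidal

lemma nabla_comp_kleisliLift (hA : IsMonoid η μ) {X : C} {ψ : X ⊗ A ⟶ A ⊗ X}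
    {k : X ⟶ A ⊗ X} (h : ψ ≫ kleisliLift μ k = ψ) :
    nabla η μ ψ ≫ kleisliLift μ k = nabla η μ ψ := by
  rw [nabla_eq_kleisliLift, kleisliLift_comp hA, psiUnit, Category.assoc,
    Category.assoc, h]

end KleisliLift

section Compat

variable {A V : C} {η : 𝟙_ C ⟶ A} {μ : A ⊗ A ⟶ A} {ψ : V ⊗ A ⟶ A ⊗ V}

lemma Compat.comp_nabla (hA : IsMonoid η μ) (hψ : Compat μ ψ) :
    ψ ≫ nabla η μ ψ = ψ := by
  simp only [nabla]
  rw [rightUnitor_inv_naturality_assoc, ← whisker_exchange_assoc, hψ]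
  calc (ρ_ (V ⊗ A)).inv ≫ ((V ⊗ A) ◁ η) ≫ (α_ V A A).hom ≫ (V ◁ μ) ≫ ψ
      = (ρ_ (V ⊗ A)).inv ≫ (α_ V A (𝟙_ C)).hom ≫ (V ◁ ((A ◁ η) ≫ μ)) ≫ ψ := by
        simp only [MonoidalCategory.whiskerLeft_comp, Category.assoc]; monoidal
    _ = ψ := by rw [hA.2.1]; monoidal

lemma Compat.psiUnit_whiskerRight_comp (hA : IsMonoid η μ) (hψ : Compat μ ψ) :
    (psiUnit η ψ ▷ A) ≫ (α_ A V A).hom ≫ (A ◁ ψ) ≫ (α_ A A V).inv ≫ (μ ▷ V) = ψ := by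
  simp only [psiUnit, comp_whiskerRight, Category.assoc]
  rw [hψ]
  calc (ρ_ V).inv ▷ A ≫ (V ◁ η) ▷ A ≫ (α_ V A A).hom ≫ (V ◁ μ) ≫ ψ
      = (ρ_ V).inv ▷ A ≫ (α_ V (𝟙_ C) A).hom ≫ (V ◁ ((η ▷ A) ≫ μ)) ≫ ψ := by
        simp only [MonoidalCategory.whiskerLeft_comp, Category.assoc]; monoidal
    _ = ψ := by rw [hA.1]; monoidal

end Compat

section Iterated

variable {A V W : C} {η : 𝟙_ C ⟶ A} {μ : A ⊗ A ⟶ A} {ψV : V ⊗ A ⟶ A ⊗ V}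

lemma psiUnit_psi2 (η : 𝟙_ C ⟶ A) (ψV : V ⊗ A ⟶ A ⊗ V) (ψW : W ⊗ A ⟶ A ⊗ W) :
    psiUnit η (psi2 ψV ψW)
      = (V ◁ psiUnit η ψW) ≫ (α_ V A W).inv ≫ (ψV ▷ W) ≫ (α_ A V W).hom := by
  simp only [psiUnit, psi2, MonoidalCategory.whiskerLeft_comp, Category.assoc]
  monoidal

lemma psiUnit_whiskerRight_comp_nabla_psi2 (hA : IsMonoid η μ) (hψV : Compat μ ψV)
    (ψW : W ⊗ A ⟶ A ⊗ W) :
    ((psiUnit η ψV ▷ W) ≫ (α_ A V W).hom) ≫ nabla η μ (psi2 ψV ψW)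
      = psiUnit η (psi2 ψV ψW) := by
  rw [nabla_eq_kleisliLift, psiUnit_psi2, kleisliLift]
  calc ((psiUnit η ψV ▷ W) ≫ (α_ A V W).hom) ≫
        (A ◁ ((V ◁ psiUnit η ψW) ≫ (α_ V A W).inv ≫ (ψV ▷ W) ≫ (α_ A V W).hom)) ≫
        (α_ A A (V ⊗ W)).inv ≫ (μ ▷ (V ⊗ W))
      = (psiUnit η ψV ▷ W) ≫ ((A ⊗ V) ◁ psiUnit η ψW) ≫ (α_ A V (A ⊗ W)).hom ≫
          (A ◁ (α_ V A W).inv) ≫ (A ◁ (ψV ▷ W)) ≫ (A ◁ (α_ A V W).hom) ≫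
          (α_ A A (V ⊗ W)).inv ≫ (μ ▷ (V ⊗ W)) := by
        simp only [MonoidalCategory.whiskerLeft_comp, Category.assoc]; monoidal
    _ = (V ◁ psiUnit η ψW) ≫ (α_ V A W).inv ≫
          (((psiUnit η ψV ▷ A) ≫ (α_ A V A).hom ≫ (A ◁ ψV) ≫
            (α_ A A V).inv ≫ (μ ▷ V)) ▷ W) ≫ (α_ A V W).hom := by
        rw [← whisker_exchange_assoc]
        simp only [comp_whiskerRight, Category.assoc]; monoidal
    _ = (V ◁ psiUnit η ψW) ≫ (α_ V A W).inv ≫ (ψV ▷ W) ≫ (α_ A V W).hom := by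
        rw [hψV.psiUnit_whiskerRight_comp hA]

lemma nablaWhiskerRight_comp_nabla_psi2 (hA : IsMonoid η μ) (hψV : Compat μ ψV)
    (ψW : W ⊗ A ⟶ A ⊗ W) :
    nablaWhiskerRight η μ ψV W ≫ nabla η μ (psi2 ψV ψW) = nabla η μ (psi2 ψV ψW) := by
  rw [nablaWhiskerRight_eq_kleisliLift, nabla_eq_kleisliLift η μ (psi2 ψV ψW),
    kleisliLift_comp hA]
  congr 1
  rw [← nabla_eq_kleisliLift, psiUnit_whiskerRight_comp_nabla_psi2 hA hψV]

lemma nablaWhiskerRight_comp_nabla_psiVW (hA : IsMonoid η μ) (hψV : Compat μ ψV)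
    {ψW : W ⊗ A ⟶ A ⊗ W} {Δ : V ⊗ W ⟶ V ⊗ W} (hΔ : IsLink η μ ψV ψW Δ) :
    nablaWhiskerRight η μ ψV W ≫ nabla η μ (psiVW ψV ψW Δ) = nabla η μ (psiVW ψV ψW Δ) := by
  have hpsi2 : nabla η μ (psi2 ψV ψW) ≫ nabla η μ (psiVW ψV ψW Δ)
      = nabla η μ (psiVW ψV ψW Δ) := by
    rw [nabla_eq_kleisliLift η μ (psi2 ψV ψW), nabla_eq_kleisliLift η μ (psiVW ψV ψW Δ),
      kleisliLift_comp hA]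
    congr 1
    rw [← nabla_eq_kleisliLift, psiUnit, psiUnit, Category.assoc, Category.assoc, ← hΔ.2]
  rw [← hpsi2, ← Category.assoc, nablaWhiskerRight_comp_nabla_psi2 hA hψV]

lemma psiVW_comp_nablaWhiskerRight (hA : IsMonoid η μ) (hψV : Compat μ ψV)
    (ψW : W ⊗ A ⟶ A ⊗ W) (Δ : V ⊗ W ⟶ V ⊗ W) :
    psiVW ψV ψW Δ ≫ nablaWhiskerRight η μ ψV W = psiVW ψV ψW Δ := by
  simp only [nablaWhiskerRight, psiVW, psi2, Category.assoc, Iso.hom_inv_id_assoc]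
  rw [← comp_whiskerRight_assoc, hψV.comp_nabla hA]

lemma nabla_psiVW_comp_nablaWhiskerRight (hA : IsMonoid η μ) (hψV : Compat μ ψV)
    (ψW : W ⊗ A ⟶ A ⊗ W) (Δ : V ⊗ W ⟶ V ⊗ W) :
    nabla η μ (psiVW ψV ψW Δ) ≫ nablaWhiskerRight η μ ψV W = nabla η μ (psiVW ψV ψW Δ) := by
  rw [nablaWhiskerRight_eq_kleisliLift]
  exact nabla_comp_kleisliLift hA
    (by rw [← nablaWhiskerRight_eq_kleisliLift, psiVW_comp_nablaWhiskerRight hA hψV])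

end Iterated

lemma splittings_comp_eq_id {D : Type*} [Category D] {P M Y Z : D} {j : P ⟶ M}
    {q : M ⟶ P} {e n : M ⟶ M} (hqj : q ≫ j = e) (hl : e ≫ n = n) (hr : n ≫ e = n)
    {i : Z ⟶ M} {p : M ⟶ Z} (hpi : p ≫ i = n) (hip : i ≫ p = 𝟙 Z)
    {iY : Y ⟶ P} {pY : P ⟶ Y} (hpiY : pY ≫ iY = j ≫ n ≫ q) (hipY : iY ≫ pY = 𝟙 Y) :
    (iY ≫ j ≫ p) ≫ (i ≫ q ≫ pY) = 𝟙 Y ∧ (i ≫ q ≫ pY) ≫ (iY ≫ j ≫ p) = 𝟙 Z := by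
  subst hqj
  constructor
  · simp only [Category.assoc]
    rw [reassoc_of% hpi, ← reassoc_of% hpiY, reassoc_of% hipY, hipY]
  · simp only [Category.assoc]
    rw [reassoc_of% hpiY, reassoc_of% hl, reassoc_of% hr, ← hpi, Category.assoc,
      reassoc_of% hip, hip]

theorem statement12_general {A V W : C} (η : 𝟙_ C ⟶ A) (μ : A ⊗ A ⟶ A)
    (ψV : V ⊗ A ⟶ A ⊗ V)
    (ψW : W ⊗ A ⟶ A ⊗ W)
    (Δ : V ⊗ W ⟶ V ⊗ W)
    (hA : IsMonoid η μ) (hψV : Compat μ ψV)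
    (hΔ : IsLink η μ ψV ψW Δ)
    {X Z : C} (iX : X ⟶ A ⊗ V) (pX : A ⊗ V ⟶ X)
    (hX1 : pX ≫ iX = nabla η μ ψV)
    (i2 : Z ⟶ A ⊗ (V ⊗ W)) (p2 : A ⊗ (V ⊗ W) ⟶ Z)
    (hZ1 : p2 ≫ i2 = nabla η μ (psiVW ψV ψW Δ)) (hZ2 : i2 ≫ p2 = 𝟙 Z)
    {Y : C} (iY : Y ⟶ X ⊗ W) (pY : X ⊗ W ⟶ Y)
    (hY1 : pY ≫ iY = nabPrime η μ ψV ψW Δ iX pX) (hY2 : iY ≫ pY = 𝟙 Y) :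
    (iY ≫ (iX ▷ W) ≫ (α_ A V W).hom ≫ p2) ≫
          (i2 ≫ (α_ A V W).inv ≫ (pX ▷ W) ≫ pY) = 𝟙 Y ∧
      (i2 ≫ (α_ A V W).inv ≫ (pX ▷ W) ≫ pY) ≫
          (iY ≫ (iX ▷ W) ≫ (α_ A V W).hom ≫ p2) = 𝟙 Z := by
  have hqj : ((α_ A V W).inv ≫ (pX ▷ W)) ≫ (iX ▷ W) ≫ (α_ A V W).hom
      = nablaWhiskerRight η μ ψV W := by
    simp only [nablaWhiskerRight, Category.assoc, ← comp_whiskerRight_assoc, hX1]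
  simpa only [Category.assoc] using
    splittings_comp_eq_id hqj (nablaWhiskerRight_comp_nabla_psiVW hA hψV hΔ)
      (nabla_psiVW_comp_nablaWhiskerRight hA hψV ψW Δ) hZ1 hZ2
      (by rw [hY1, nabPrime]; simp only [Category.assoc]) hY2

theorem statement12 {A V W : C} (η : 𝟙_ C ⟶ A) (μ : A ⊗ A ⟶ A)
    (ψV : V ⊗ A ⟶ A ⊗ V) (σV : V ⊗ V ⟶ A ⊗ V)
    (ψW : W ⊗ A ⟶ A ⊗ W) (σW : W ⊗ W ⟶ A ⊗ W)
    (Δ : V ⊗ W ⟶ V ⊗ W) (τ : W ⊗ V ⟶ V ⊗ W)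
    (hA : IsMonoid η μ) (hψV : Compat μ ψV) (hψW : Compat μ ψW)
    (htwV : Twisted μ ψV σV) (htwW : Twisted μ ψW σW)
    (hcoV : Cocycle μ ψV σV) (hcoW : Cocycle μ ψW σW)
    (hnV : Normalized η μ ψV σV) (hnW : Normalized η μ ψW σW)
    (hΔ : IsLink η μ ψV ψW Δ)
    (hτ1 : TwistI ψV ψW τ) (hτ2 : TwistII μ ψV σV ψW σW τ)
    (hσ : SigmaCompat Δ (sigmaVW μ ψV σV σW τ))
    (νV : 𝟙_ C ⟶ A ⊗ V) (νW : 𝟙_ C ⟶ A ⊗ W)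
    (hp1V : PreEq1 η μ ψV σV νV) (hp2V : PreEq2 η μ ψV σV νV)
    (hp3V : PreEq3 μ ψV νV)
    (hp1W : PreEq1 η μ ψW σW νW) (hp2W : PreEq2 η μ ψW σW νW)
    (hp3W : PreEq3 μ ψW νW)
    (huV : IsPreunit (wmul μ ψV σV) νV) (huW : IsPreunit (wmul μ ψW σW) νW)
    (hip1 : IterPre1 η μ ψV σV ψW τ Δ νV)
    (hip2 : IterPre2 η μ ψV ψW σW τ Δ νW)
    {X Z : C} (iX : X ⟶ A ⊗ V) (pX : A ⊗ V ⟶ X)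
    (hX1 : pX ≫ iX = nabla η μ ψV) (hX2 : iX ≫ pX = 𝟙 X)
    (i2 : Z ⟶ A ⊗ (V ⊗ W)) (p2 : A ⊗ (V ⊗ W) ⟶ Z)
    (hZ1 : p2 ≫ i2 = nabla η μ (psiVW ψV ψW Δ)) (hZ2 : i2 ≫ p2 = 𝟙 Z)
    {Y : C} (iY : Y ⟶ X ⊗ W) (pY : X ⊗ W ⟶ Y)
    (hY1 : pY ≫ iY = nabPrime η μ ψV ψW Δ iX pX) (hY2 : iY ≫ pY = 𝟙 Y) :
    (iY ≫ (iX ▷ W) ≫ (α_ A V W).hom ≫ p2) ≫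
          (i2 ≫ (α_ A V W).inv ≫ (pX ▷ W) ≫ pY) = 𝟙 Y ∧
      (i2 ≫ (α_ A V W).inv ≫ (pX ▷ W) ≫ pY) ≫
          (iY ≫ (iX ▷ W) ≫ (α_ A V W).hom ≫ p2) = 𝟙 Z :=
  statement12_general η μ ψV ψW Δ hA hψV hΔ iX pX hX1 i2 p2 hZ1 hZ2 iY pY hY1 hY2

end IteratedWCP
end

section
/- Let S, T, D be monoids in a strict monoidal category and let λ1 : T⊗S → S⊗T, λ2 : D⊗T → T⊗D, λ3 : D⊗S → S⊗D be weak distributive laws satisfying the Yang–Baxter relation. Then Δ = ∇_{T⊗D} is a link morphism between the quadruples 𝕊_T and 𝕊_D, i.e. with ψ_{T⊗D} = (λ1⊗D)∘(T⊗λ3)∘(∇_{T⊗D}⊗S) and ∇_{S⊗T⊗D} = (μ_S⊗T⊗D)∘(S⊗ψ_{T⊗D})∘(S⊗T⊗D⊗η_S), the following two equalities hold: (S⊗∇_{T⊗D})∘ψ_{T⊗D} = ψ_{T⊗D} and ψ_{T⊗D} = ∇_{S⊗T⊗D}∘(λ1⊗D)∘(T⊗λ3). -/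
open CategoryTheory MonoidalCategory

namespace IteratedWCP

universe v u

variable {C : Type u} [Category.{v} C] [MonoidalCategory C]

/-!
Both sides of each equality are brought to one normal form. Writing `u = λ1 ∘ (η_T ⊗ S)`,
multiplicativity of `λ1` in `T` and the Yang–Baxter relation with `η_T` inserted give
`ψ_{T⊗D} = (S ⊗ μ_T ⊗ D) ∘ (λ1 ⊗ T ⊗ D) ∘ (T ⊗ (S ⊗ λ2) ∘ (λ3 ⊗ T) ∘ (D ⊗ u))`.
In this form `S ⊗ ∇_{T⊗D}` is absorbed, because `∇_{T⊗D}` is left `T`-linear and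
`∇_{T⊗D} ∘ λ2 = λ2`. On the other side, multiplicativity of `λ1` and `λ3` in `S` collects
the factor `S` of `∇_{S⊗T⊗D}` into `(μ_S ⊗ T) ∘ (S ⊗ λ1 ∘ (η_T ⊗ η_S))`, which is `u` by the
third axiom of a weak distributive law.
-/

section LinkMorphism

variable {S T D : C}

theorem comp_rightUnitor_inv_whiskerLeft {X Y E : C} (f : X ⟶ Y) (h : 𝟙_ C ⟶ E) :
    f ≫ (ρ_ Y).inv ≫ (Y ◁ h) = (ρ_ X).inv ≫ (X ◁ h) ≫ (f ▷ E) := by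
  rw [whisker_exchange]
  monoidal

theorem WDL.compat {ηT : 𝟙_ C ⟶ T} {μT : T ⊗ T ⟶ T} {ηS : 𝟙_ C ⟶ S} {μS : S ⊗ S ⟶ S}
    {lam : T ⊗ S ⟶ S ⊗ T} (h : WDL ηT μT ηS μS lam) : Compat μS lam := by
  simp [Compat, h.2.1]

section Nabla

variable {A V : C} {η : 𝟙_ C ⟶ A} {μ : A ⊗ A ⟶ A} {l : V ⊗ A ⟶ A ⊗ V}

theorem comp_nabWDL (hA : IsMonoid η μ) (hc : Compat μ l) : l ≫ nabWDL η μ l = l :=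
  calc l ≫ nabWDL η μ l
      = (l ≫ (ρ_ (A ⊗ V)).inv ≫ ((A ⊗ V) ◁ η)) ≫ (α_ A V A).hom ≫ (A ◁ l) ≫
          (α_ A A V).inv ≫ (μ ▷ V) := by
        rw [nabWDL]
        monoidal
    _ = (ρ_ (V ⊗ A)).inv ≫ ((V ⊗ A) ◁ η) ≫ (l ▷ A) ≫ (α_ A V A).hom ≫ (A ◁ l) ≫
          (α_ A A V).inv ≫ (μ ▷ V) := by
        rw [comp_rightUnitor_inv_whiskerLeft]
        simp only [Category.assoc]
    _ = (V ◁ ((ρ_ A).inv ≫ (A ◁ η) ≫ μ)) ≫ l := by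
        rw [hc]
        monoidal
    _ = l := by rw [hA.2.1]; simp

theorem mul_comp_nabWDL (hA : IsMonoid η μ) :
    (α_ A A V).inv ≫ (μ ▷ V) ≫ nabWDL η μ l
      = (A ◁ nabWDL η μ l) ≫ (α_ A A V).inv ≫ (μ ▷ V) :=
  calc (α_ A A V).inv ≫ (μ ▷ V) ≫ nabWDL η μ l
      = (α_ A A V).inv ≫ ((μ ▷ V) ≫ (A ◁ ((ρ_ V).inv ≫ (V ◁ η) ≫ l))) ≫
          (α_ A A V).inv ≫ (μ ▷ V) := by
        simp only [nabWDL, Category.assoc]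
    _ = (α_ A A V).inv ≫ (((A ⊗ A) ◁ ((ρ_ V).inv ≫ (V ◁ η) ≫ l)) ≫ (μ ▷ (A ⊗ V))) ≫
          (α_ A A V).inv ≫ (μ ▷ V) := by
        rw [whisker_exchange]
    _ = (α_ A A V).inv ≫ ((A ⊗ A) ◁ ((ρ_ V).inv ≫ (V ◁ η) ≫ l)) ≫
          (α_ (A ⊗ A) A V).inv ≫ (((μ ▷ A) ≫ μ) ▷ V) := by
        monoidal
    _ = (A ◁ nabWDL η μ l) ≫ (α_ A A V).inv ≫ (μ ▷ V) := by
        rw [hA.2.2, nabWDL]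
        monoidal

end Nabla

def unitLeft (ηT : 𝟙_ C ⟶ T) (lam : T ⊗ S ⟶ S ⊗ T) : S ⟶ S ⊗ T :=
  (λ_ S).inv ≫ (ηT ▷ S) ≫ lam

/-- `(S ⊗ λ2) ∘ (λ3 ⊗ T) ∘ (D ⊗ u)`. -/
def slideD {Y : C} (l2 : D ⊗ T ⟶ T ⊗ D) (l3 : D ⊗ S ⟶ S ⊗ D) (u : Y ⟶ S ⊗ T) :
    D ⊗ Y ⟶ S ⊗ (T ⊗ D) :=
  (D ◁ u) ≫ (α_ D S T).inv ≫ (l3 ▷ T) ≫ (α_ S D T).hom ≫ (S ◁ l2)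

/-- `(S ⊗ μ_T ⊗ Z) ∘ (λ1 ⊗ T ⊗ Z) ∘ (T ⊗ f)`. -/
def actT {Y Z : C} (μT : T ⊗ T ⟶ T) (l1 : T ⊗ S ⟶ S ⊗ T) (f : Y ⟶ S ⊗ (T ⊗ Z)) :
    T ⊗ Y ⟶ S ⊗ (T ⊗ Z) :=
  (T ◁ f) ≫ (α_ T S (T ⊗ Z)).inv ≫ (l1 ▷ (T ⊗ Z)) ≫ (α_ S T (T ⊗ Z)).hom ≫
    (S ◁ ((α_ T T Z).inv ≫ (μT ▷ Z)))

theorem whiskerLeft_comp_slideD {X Y : C} (l2 : D ⊗ T ⟶ T ⊗ D) (l3 : D ⊗ S ⟶ S ⊗ D)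
    (g : X ⟶ Y) (u : Y ⟶ S ⊗ T) : (D ◁ g) ≫ slideD l2 l3 u = slideD l2 l3 (g ≫ u) := by
  simp [slideD]

theorem slideD_comp_nabWDL {Y : C} {ηT : 𝟙_ C ⟶ T} {μT : T ⊗ T ⟶ T} {l2 : D ⊗ T ⟶ T ⊗ D}
    (hT : IsMonoid ηT μT) (hc : Compat μT l2) (l3 : D ⊗ S ⟶ S ⊗ D) (u : Y ⟶ S ⊗ T) :
    slideD l2 l3 u ≫ (S ◁ nabWDL ηT μT l2) = slideD l2 l3 u := by
  simp only [slideD, Category.assoc, ← whiskerLeft_comp, comp_nabWDL hT hc]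

theorem actT_comp_whiskerLeft_nabWDL {Y Z : C} {ηT : 𝟙_ C ⟶ T} {μT : T ⊗ T ⟶ T}
    (hT : IsMonoid ηT μT) (l1 : T ⊗ S ⟶ S ⊗ T) (l : Z ⊗ T ⟶ T ⊗ Z)
    (f : Y ⟶ S ⊗ (T ⊗ Z)) :
    actT μT l1 f ≫ (S ◁ nabWDL ηT μT l) = actT μT l1 (f ≫ (S ◁ nabWDL ηT μT l)) :=
  calc actT μT l1 f ≫ (S ◁ nabWDL ηT μT l)
      = (T ◁ f) ≫ (α_ T S (T ⊗ Z)).inv ≫ (l1 ▷ (T ⊗ Z)) ≫ (α_ S T (T ⊗ Z)).hom ≫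
          (S ◁ ((T ◁ nabWDL ηT μT l) ≫ (α_ T T Z).inv ≫ (μT ▷ Z))) := by
        simp only [actT, Category.assoc, ← whiskerLeft_comp, mul_comp_nabWDL hT]
    _ = (T ◁ f) ≫ (α_ T S (T ⊗ Z)).inv ≫
          ((l1 ▷ (T ⊗ Z)) ≫ ((S ⊗ T) ◁ nabWDL ηT μT l)) ≫ (α_ S T (T ⊗ Z)).hom ≫
          (S ◁ ((α_ T T Z).inv ≫ (μT ▷ Z))) := by
        monoidal
    _ = (T ◁ f) ≫ (α_ T S (T ⊗ Z)).inv ≫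
          (((T ⊗ S) ◁ nabWDL ηT μT l) ≫ (l1 ▷ (T ⊗ Z))) ≫ (α_ S T (T ⊗ Z)).hom ≫
          (S ◁ ((α_ T T Z).inv ≫ (μT ▷ Z))) := by
        rw [whisker_exchange]
    _ = actT μT l1 (f ≫ (S ◁ nabWDL ηT μT l)) := by
        simp only [actT]
        monoidal

theorem actT_mul_left {Y Z : C} {μS : S ⊗ S ⟶ S} {l1 : T ⊗ S ⟶ S ⊗ T} (hc : Compat μS l1)
    (μT : T ⊗ T ⟶ T) (g : Y ⟶ S ⊗ (T ⊗ Z)) :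
    (α_ T S Y).inv ≫ (l1 ▷ Y) ≫ (α_ S T Y).hom ≫ (S ◁ actT μT l1 g) ≫
        (α_ S S (T ⊗ Z)).inv ≫ (μS ▷ (T ⊗ Z))
      = actT μT l1 ((S ◁ g) ≫ (α_ S S (T ⊗ Z)).inv ≫ (μS ▷ (T ⊗ Z))) :=
  calc _ = (α_ T S Y).inv ≫ ((l1 ▷ Y) ≫ ((S ⊗ T) ◁ g)) ≫ (α_ S T (S ⊗ (T ⊗ Z))).hom ≫ (S ◁ (α_ T S (T ⊗ Z)).inv) ≫
          (S ◁ (l1 ▷ (T ⊗ Z))) ≫ (S ◁ (α_ S T (T ⊗ Z)).hom) ≫ (α_ S S (T ⊗ (T ⊗ Z))).inv ≫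
          (((S ⊗ S) ◁ ((α_ T T Z).inv ≫ (μT ▷ Z))) ≫ (μS ▷ (T ⊗ Z))) := by
        simp only [actT]
        monoidal
    _ = (α_ T S Y).inv ≫ (((T ⊗ S) ◁ g) ≫ (l1 ▷ (S ⊗ (T ⊗ Z)))) ≫
          (α_ S T (S ⊗ (T ⊗ Z))).hom ≫ (S ◁ (α_ T S (T ⊗ Z)).inv) ≫
          (S ◁ (l1 ▷ (T ⊗ Z))) ≫ (S ◁ (α_ S T (T ⊗ Z)).hom) ≫ (α_ S S (T ⊗ (T ⊗ Z))).inv ≫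
          ((μS ▷ (T ⊗ (T ⊗ Z))) ≫ (S ◁ ((α_ T T Z).inv ≫ (μT ▷ Z)))) := by
        rw [← whisker_exchange l1 g, whisker_exchange μS]
    _ = (T ◁ (S ◁ g)) ≫ (α_ T S (S ⊗ (T ⊗ Z))).inv ≫ (α_ (T ⊗ S) S (T ⊗ Z)).inv ≫
          (((l1 ▷ S) ≫ (α_ S T S).hom ≫ (S ◁ l1) ≫ (α_ S S T).inv ≫ (μS ▷ T)) ▷ (T ⊗ Z)) ≫
          (α_ S T (T ⊗ Z)).hom ≫ (S ◁ ((α_ T T Z).inv ≫ (μT ▷ Z))) := by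
        monoidal
    _ = actT μT l1 ((S ◁ g) ≫ (α_ S S (T ⊗ Z)).inv ≫ (μS ▷ (T ⊗ Z))) := by
        rw [hc, actT]
        monoidal

theorem mul_whiskerRight_psi2 {ηT : 𝟙_ C ⟶ T} {μT : T ⊗ T ⟶ T} {ηS : 𝟙_ C ⟶ S}
    {μS : S ⊗ S ⟶ S} {l1 : T ⊗ S ⟶ S ⊗ T} (h1 : WDL ηT μT ηS μS l1) (l3 : D ⊗ S ⟶ S ⊗ D) :
    (((α_ T T D).inv ≫ (μT ▷ D)) ▷ S) ≫ psi2 l1 l3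
      = (α_ T (T ⊗ D) S).hom ≫ actT μT l1 (psi2 l1 l3) :=
  calc _ = ((α_ T T D).inv ▷ S) ≫ (α_ (T ⊗ T) D S).hom ≫ ((μT ▷ (D ⊗ S)) ≫ (T ◁ l3)) ≫
          (α_ T S D).inv ≫ (l1 ▷ D) ≫ (α_ S T D).hom := by
        simp only [psi2]
        monoidal
    _ = ((α_ T T D).inv ▷ S) ≫ (α_ (T ⊗ T) D S).hom ≫ (((T ⊗ T) ◁ l3) ≫ (μT ▷ (S ⊗ D))) ≫
          (α_ T S D).inv ≫ (l1 ▷ D) ≫ (α_ S T D).hom := by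
        rw [whisker_exchange]
    _ = ((α_ T T D).inv ▷ S) ≫ (α_ (T ⊗ T) D S).hom ≫ ((T ⊗ T) ◁ l3) ≫
          (α_ (T ⊗ T) S D).inv ≫ (((μT ▷ S) ≫ l1) ▷ D) ≫ (α_ S T D).hom := by
        monoidal
    _ = (α_ T (T ⊗ D) S).hom ≫ actT μT l1 (psi2 l1 l3) := by
        rw [h1.1, actT, psi2]
        monoidal

theorem YB.unit_whiskerRight_psi2 {l1 : T ⊗ S ⟶ S ⊗ T} {l2 : D ⊗ T ⟶ T ⊗ D}
    {l3 : D ⊗ S ⟶ S ⊗ D} (hyb : YB l1 l2 l3) (ηT : 𝟙_ C ⟶ T) :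
    (((ρ_ D).inv ≫ (D ◁ ηT) ≫ l2) ▷ S) ≫ psi2 l1 l3 = slideD l2 l3 (unitLeft ηT l1) :=
  calc _ = (((ρ_ D).inv ≫ (D ◁ ηT)) ▷ S) ≫ ((l2 ▷ S) ≫ (α_ T D S).hom ≫ (T ◁ l3) ≫
          (α_ T S D).inv ≫ (l1 ▷ D) ≫ (α_ S T D).hom) := by
        simp only [psi2, comp_whiskerRight, Category.assoc]
    _ = (((ρ_ D).inv ≫ (D ◁ ηT)) ▷ S) ≫ ((α_ D T S).hom ≫ (D ◁ l1) ≫ (α_ D S T).inv ≫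
          (l3 ▷ T) ≫ (α_ S D T).hom ≫ (S ◁ l2)) := by
        rw [← show _ = _ from hyb]
    _ = slideD l2 l3 (unitLeft ηT l1) := by
        simp only [slideD, unitLeft]
        monoidal

theorem psiVW_nabWDL_eq_actT {ηT : 𝟙_ C ⟶ T} {μT : T ⊗ T ⟶ T} {ηS : 𝟙_ C ⟶ S}
    {μS : S ⊗ S ⟶ S} {l1 : T ⊗ S ⟶ S ⊗ T} {l2 : D ⊗ T ⟶ T ⊗ D} {l3 : D ⊗ S ⟶ S ⊗ D}
    (h1 : WDL ηT μT ηS μS l1) (hyb : YB l1 l2 l3) :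
    psiVW l1 l3 (nabWDL ηT μT l2)
      = (α_ T D S).hom ≫ actT μT l1 (slideD l2 l3 (unitLeft ηT l1)) :=
  calc _ = ((T ◁ ((ρ_ D).inv ≫ (D ◁ ηT) ≫ l2)) ▷ S) ≫
          ((((α_ T T D).inv ≫ (μT ▷ D)) ▷ S) ≫ psi2 l1 l3) := by
        simp only [psiVW, nabWDL, comp_whiskerRight, Category.assoc]
    _ = (α_ T D S).hom ≫ actT μT l1 ((((ρ_ D).inv ≫ (D ◁ ηT) ≫ l2) ▷ S) ≫ psi2 l1 l3) := by
        rw [mul_whiskerRight_psi2 h1, actT, actT]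
        monoidal
    _ = (α_ T D S).hom ≫ actT μT l1 (slideD l2 l3 (unitLeft ηT l1)) := by
        rw [hyb.unit_whiskerRight_psi2]

theorem psi2_comp_nabla_actT {ηS : 𝟙_ C ⟶ S} {μS : S ⊗ S ⟶ S} {l1 : T ⊗ S ⟶ S ⊗ T}
    (hc : Compat μS l1) (μT : T ⊗ T ⟶ T) (l3 : D ⊗ S ⟶ S ⊗ D) (f : D ⊗ S ⟶ S ⊗ (T ⊗ D)) :
    psi2 l1 l3 ≫ nabla ηS μS ((α_ T D S).hom ≫ actT μT l1 f)
      = (α_ T D S).hom ≫ actT μT l1 (l3 ≫ (S ◁ ((ρ_ D).inv ≫ (D ◁ ηS) ≫ f)) ≫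
          (α_ S S (T ⊗ D)).inv ≫ (μS ▷ (T ⊗ D))) :=
  calc _ = (α_ T D S).hom ≫ (T ◁ l3) ≫ ((α_ T S D).inv ≫ (l1 ▷ D) ≫ (α_ S T D).hom ≫
          (S ◁ actT μT l1 ((ρ_ D).inv ≫ (D ◁ ηS) ≫ f)) ≫
          (α_ S S (T ⊗ D)).inv ≫ (μS ▷ (T ⊗ D))) := by
        simp only [psi2, nabla, actT]
        monoidal
    _ = _ := by
        rw [actT_mul_left hc, actT, actT]
        monoidal

theorem slideD_mul {μS : S ⊗ S ⟶ S} {l3 : D ⊗ S ⟶ S ⊗ D} (hc : Compat μS l3)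
    (l2 : D ⊗ T ⟶ T ⊗ D) (v : 𝟙_ C ⟶ S ⊗ T) :
    l3 ≫ (S ◁ ((ρ_ D).inv ≫ slideD l2 l3 v)) ≫ (α_ S S (T ⊗ D)).inv ≫ (μS ▷ (T ⊗ D))
      = slideD l2 l3 ((ρ_ S).inv ≫ (S ◁ v) ≫ (α_ S S T).inv ≫ (μS ▷ T)) :=
  calc _ = (l3 ≫ (ρ_ (S ⊗ D)).inv ≫ ((S ⊗ D) ◁ v)) ≫ (α_ S D (S ⊗ T)).hom ≫
          (S ◁ (α_ D S T).inv) ≫ (S ◁ (l3 ▷ T)) ≫ (S ◁ (α_ S D T).hom) ≫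
          (α_ S S (D ⊗ T)).inv ≫ (((S ⊗ S) ◁ l2) ≫ (μS ▷ (T ⊗ D))) := by
        simp only [slideD]
        monoidal
    _ = ((ρ_ (D ⊗ S)).inv ≫ ((D ⊗ S) ◁ v) ≫ (l3 ▷ (S ⊗ T))) ≫ (α_ S D (S ⊗ T)).hom ≫
          (S ◁ (α_ D S T).inv) ≫ (S ◁ (l3 ▷ T)) ≫ (S ◁ (α_ S D T).hom) ≫
          (α_ S S (D ⊗ T)).inv ≫ ((μS ▷ (D ⊗ T)) ≫ (S ◁ l2)) := by
        rw [comp_rightUnitor_inv_whiskerLeft, whisker_exchange μS l2]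
    _ = (ρ_ (D ⊗ S)).inv ≫ ((D ⊗ S) ◁ v) ≫ (α_ (D ⊗ S) S T).inv ≫
          (((l3 ▷ S) ≫ (α_ S D S).hom ≫ (S ◁ l3) ≫ (α_ S S D).inv ≫ (μS ▷ D)) ▷ T) ≫
          (α_ S D T).hom ≫ (S ◁ l2) := by
        monoidal
    _ = _ := by
        rw [hc, slideD]
        monoidal

theorem unit_comp_unitLeft (ηS : 𝟙_ C ⟶ S) (ηT : 𝟙_ C ⟶ T) (lam : T ⊗ S ⟶ S ⊗ T) :
    ηS ≫ unitLeft ηT lam = ηT ≫ (ρ_ T).inv ≫ (T ◁ ηS) ≫ lam := by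
  rw [unitLeft, leftUnitor_inv_naturality_assoc, whisker_exchange_assoc,
    rightUnitor_inv_naturality_assoc, unitors_inv_equal]

theorem mul_unit_unitLeft {ηT : 𝟙_ C ⟶ T} {μT : T ⊗ T ⟶ T} {ηS : 𝟙_ C ⟶ S}
    {μS : S ⊗ S ⟶ S} {l1 : T ⊗ S ⟶ S ⊗ T} (hT : IsMonoid ηT μT) (h1 : WDL ηT μT ηS μS l1) :
    (ρ_ S).inv ≫ (S ◁ (ηS ≫ unitLeft ηT l1)) ≫ (α_ S S T).inv ≫ (μS ▷ T) = unitLeft ηT l1 :=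
  calc _ = (ρ_ S).inv ≫ (S ◁ ηT) ≫ (S ◁ ((ρ_ T).inv ≫ (T ◁ ηS) ≫ l1)) ≫
          (α_ S S T).inv ≫ (μS ▷ T) := by
        simp only [unit_comp_unitLeft, whiskerLeft_comp, Category.assoc]
    _ = ((ρ_ S).inv ≫ (S ◁ ηT) ≫ (unitLeft ηT l1 ▷ T)) ≫ (α_ S T T).hom ≫ (S ◁ μT) := by
        rw [← h1.2.2, unitLeft]
        simp only [Category.assoc]
    _ = unitLeft ηT l1 ≫ (S ◁ ((ρ_ T).inv ≫ (T ◁ ηT) ≫ μT)) := by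
        rw [← comp_rightUnitor_inv_whiskerLeft]
        monoidal
    _ = unitLeft ηT l1 := by rw [hT.2.1]; simp

end LinkMorphism

theorem statement15_general {S T D : C} (ηS : 𝟙_ C ⟶ S) (μS : S ⊗ S ⟶ S)
    (ηT : 𝟙_ C ⟶ T) (μT : T ⊗ T ⟶ T) (ηD : 𝟙_ C ⟶ D) (μD : D ⊗ D ⟶ D)
    (hT : IsMonoid ηT μT)
    (l1 : T ⊗ S ⟶ S ⊗ T) (l2 : D ⊗ T ⟶ T ⊗ D) (l3 : D ⊗ S ⟶ S ⊗ D)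
    (h1 : WDL ηT μT ηS μS l1) (h2 : WDL ηD μD ηT μT l2)
    (h3 : WDL ηD μD ηS μS l3) (hyb : YB l1 l2 l3) :
    psiVW l1 l3 (nabWDL ηT μT l2) ≫ (S ◁ nabWDL ηT μT l2)
        = psiVW l1 l3 (nabWDL ηT μT l2) ∧
      psiVW l1 l3 (nabWDL ηT μT l2)
        = psi2 l1 l3 ≫ nabla ηS μS (psiVW l1 l3 (nabWDL ηT μT l2)) := by
  rw [psiVW_nabWDL_eq_actT h1 hyb]
  constructor
  · rw [Category.assoc, actT_comp_whiskerLeft_nabWDL hT,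
      slideD_comp_nabWDL hT h2.compat]
  · rw [psi2_comp_nabla_actT h1.compat, whiskerLeft_comp_slideD, slideD_mul h3.compat,
      mul_unit_unitLeft hT h1]

theorem statement15 {S T D : C} (ηS : 𝟙_ C ⟶ S) (μS : S ⊗ S ⟶ S)
    (ηT : 𝟙_ C ⟶ T) (μT : T ⊗ T ⟶ T) (ηD : 𝟙_ C ⟶ D) (μD : D ⊗ D ⟶ D)
    (hS : IsMonoid ηS μS) (hT : IsMonoid ηT μT) (hD : IsMonoid ηD μD)
    (l1 : T ⊗ S ⟶ S ⊗ T) (l2 : D ⊗ T ⟶ T ⊗ D) (l3 : D ⊗ S ⟶ S ⊗ D)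
    (h1 : WDL ηT μT ηS μS l1) (h2 : WDL ηD μD ηT μT l2)
    (h3 : WDL ηD μD ηS μS l3) (hyb : YB l1 l2 l3) :
    psiVW l1 l3 (nabWDL ηT μT l2) ≫ (S ◁ nabWDL ηT μT l2)
        = psiVW l1 l3 (nabWDL ηT μT l2) ∧
      psiVW l1 l3 (nabWDL ηT μT l2)
        = psi2 l1 l3 ≫ nabla ηS μS (psiVW l1 l3 (nabWDL ηT μT l2)) :=
  statement15_general ηS μS ηT μT ηD μD hT l1 l2 l3 h1 h2 h3 hyb

end IteratedWCP
end

section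
/- Let S, T, D be monoids in a strict monoidal category and let λ1 : T⊗S → S⊗T, λ2 : D⊗T → T⊗D, λ3 : D⊗S → S⊗D be weak distributive laws satisfying the Yang–Baxter relation. Set ν_T = ∇_{S⊗T}∘(η_S⊗η_T), ν_D = ∇_{S⊗D}∘(η_S⊗η_D), ψ_{T⊗D} = (λ1⊗D)∘(T⊗λ3)∘(∇_{T⊗D}⊗S), and ∇_{S⊗T⊗D} = (μ_S⊗T⊗D)∘(S⊗ψ_{T⊗D})∘(S⊗T⊗D⊗η_S). Then the two iterated preunit conditions hold: (μ_S⊗T⊗D)∘(S⊗σ_T⊗D)∘(λ1⊗λ2)∘(T⊗λ3⊗T)∘(∇_{T⊗D}⊗ν_T) = ∇_{S⊗T⊗D}∘(η_S⊗T⊗D) and (μ_S⊗T⊗D)∘(S⊗λ1⊗D)∘(S⊗T⊗σ_D)∘(S⊗λ2⊗D)∘(ν_D⊗T⊗D) = ∇_{S⊗T⊗D}∘(η_S⊗T⊗D); moreover ν_{T⊗D} = ∇_{S⊗T⊗D}∘(μ_S⊗T⊗D)∘(S⊗λ1⊗D)∘(ν_T⊗ν_D) equals (λ1⊗D)∘(T⊗λ3)∘(λ2⊗S)∘(η_D⊗η_T⊗η_S).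 -/
/-!
For a weak distributive law `λ` of `S` over `T` write `r = λ ∘ (T ⊗ η_S)` and
`e = λ ∘ (η_T ⊗ S)`. The axioms give `∇_{S⊗T} = (μ_S ⊗ T)(S ⊗ r) = (S ⊗ μ_T)(e ⊗ T)`,
`ν_T = r η_T = e η_S` and `λ ∇_{S⊗T} = λ`, so multiplying by `ν_T` from the left through `λ`
acts as `e`. With `η_S` plugged in, the Yang–Baxter relation carries `λ2` across
`(λ1 ⊗ D)(T ⊗ r3)`. The right-hand side `∇_{S⊗T⊗D}(η_S ⊗ T ⊗ D)` of both preunit conditions is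
`(λ1 ⊗ D)(T ⊗ r3) ∇_{T⊗D}`, and the left-hand sides reduce to it: the first through
`(μ_S ⊗ T)(S ⊗ σ_T)(λ1 ⊗ T)(T ⊗ λ1) = λ1 (μ_T ⊗ S)` and idempotence of `∇_{T⊗D}`, the second
through `r3 μ_D = (S ⊗ μ_D)(r3 ⊗ D)`. The same moves turn `ν_{T⊗D}` into
`(λ1 ⊗ D)(T ⊗ r3) e2 η_T`, the stated value.
-/

open CategoryTheory MonoidalCategory

namespace IteratedWCP

universe v u

variable {C : Type u} [Category.{v} C] [MonoidalCategory C]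

def twistR {A B : C} (ηA : 𝟙_ C ⟶ A) (l : B ⊗ A ⟶ A ⊗ B) : B ⟶ A ⊗ B :=
  (ρ_ B).inv ≫ (B ◁ ηA) ≫ l

def twistL {A B : C} (ηB : 𝟙_ C ⟶ B) (l : B ⊗ A ⟶ A ⊗ B) : A ⟶ A ⊗ B :=
  (λ_ A).inv ≫ (ηB ▷ A) ≫ l

def preunit {A B : C} (ηA : 𝟙_ C ⟶ A) (ηB : 𝟙_ C ⟶ B) (μA : A ⊗ A ⟶ A)
    (l : B ⊗ A ⟶ A ⊗ B) : 𝟙_ C ⟶ A ⊗ B :=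
  (λ_ (𝟙_ C)).inv ≫ (ηA ⊗ₘ ηB) ≫ nabWDL ηA μA l

theorem nabWDL_eq_twistR {A B : C} (η : 𝟙_ C ⟶ A) (μ : A ⊗ A ⟶ A)
    (l : B ⊗ A ⟶ A ⊗ B) :
    nabWDL η μ l = (A ◁ twistR η l) ≫ (α_ A A B).inv ≫ (μ ▷ B) := rfl

theorem sigWDL_eq_twistR {A B : C} (η : 𝟙_ C ⟶ A) (μ : B ⊗ B ⟶ B)
    (l : B ⊗ A ⟶ A ⊗ B) :
    sigWDL η μ l = (twistR η l ▷ B) ≫ (α_ A B B).hom ≫ (A ◁ μ) := rfl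

theorem leftUnitor_inv_whiskerRight_whiskerLeft {A X Y : C} (f : X ⟶ Y)
    (η : 𝟙_ C ⟶ A) :
    (λ_ X).inv ≫ (η ▷ X) ≫ (A ◁ f) = f ≫ (λ_ Y).inv ≫ (η ▷ Y) := by
  rw [← whisker_exchange, ← leftUnitor_inv_naturality_assoc]

theorem rightUnitor_inv_whiskerLeft_whiskerRight {A X Y : C} (f : X ⟶ Y)
    (η : 𝟙_ C ⟶ A) :
    (ρ_ X).inv ≫ (X ◁ η) ≫ (f ▷ A) = f ≫ (ρ_ Y).inv ≫ (Y ◁ η) := by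
  rw [whisker_exchange, ← rightUnitor_inv_naturality_assoc]

theorem comp_twistR {A X Y : C} (η : 𝟙_ C ⟶ A) (f : X ⟶ Y)
    (ψ : Y ⊗ A ⟶ A ⊗ Y) :
    f ≫ twistR η ψ = (ρ_ X).inv ≫ (X ◁ η) ≫ (f ▷ A) ≫ ψ := by
  rw [twistR, reassoc_of% rightUnitor_inv_whiskerLeft_whiskerRight]

theorem twistR_psi2 {A V W : C} (η : 𝟙_ C ⟶ A) (ψV : V ⊗ A ⟶ A ⊗ V)
    (ψW : W ⊗ A ⟶ A ⊗ W) :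
    twistR η (psi2 ψV ψW)
      = (V ◁ twistR η ψW) ≫ (α_ V A W).inv ≫ (ψV ▷ W) ≫ (α_ A V W).hom := by
  simp only [twistR, psi2, MonoidalCategory.whiskerLeft_comp, Category.assoc]
  monoidal

theorem twistR_psiVW {A V W : C} (η : 𝟙_ C ⟶ A) (ψV : V ⊗ A ⟶ A ⊗ V)
    (ψW : W ⊗ A ⟶ A ⊗ W) (Δ : V ⊗ W ⟶ V ⊗ W) :
    twistR η (psiVW ψV ψW Δ) = Δ ≫ twistR η (psi2 ψV ψW) := by
  rw [comp_twistR, psiVW, twistR]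

theorem nabla_eq_nabWDL {A V : C} (η : 𝟙_ C ⟶ A) (μ : A ⊗ A ⟶ A)
    (ψ : V ⊗ A ⟶ A ⊗ V) : nabla η μ ψ = nabWDL η μ ψ := by
  simp only [nabla, nabWDL, MonoidalCategory.whiskerLeft_comp, Category.assoc]
  monoidal

namespace IsMonoid

variable {A : C} {η : 𝟙_ C ⟶ A} {μ : A ⊗ A ⟶ A}

theorem unit_mul_left (hA : IsMonoid η μ) {X Y : C} (f : X ⟶ A ⊗ Y) :
    (λ_ X).inv ≫ (η ▷ X) ≫ (A ◁ f) ≫ (α_ A A Y).inv ≫ (μ ▷ Y) = f := by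
  slice_lhs 2 3 => rw [← whisker_exchange]
  slice_lhs 3 4 => rw [associator_inv_naturality_left]
  slice_lhs 4 5 => rw [← comp_whiskerRight, hA.1]
  rw [← leftUnitor_inv_naturality_assoc]
  monoidal

theorem unit_mul_right (hA : IsMonoid η μ) {X Y : C} (f : X ⟶ Y ⊗ A) :
    (ρ_ X).inv ≫ (X ◁ η) ≫ (f ▷ A) ≫ (α_ Y A A).hom ≫ (Y ◁ μ) = f := by
  slice_lhs 2 3 => rw [whisker_exchange]
  slice_lhs 3 4 => rw [associator_naturality_right]
  slice_lhs 4 5 => rw [← MonoidalCategory.whiskerLeft_comp, hA.2.1]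
  rw [← rightUnitor_inv_naturality_assoc]
  monoidal

theorem unit_nabla (hA : IsMonoid η μ) {V : C} (ψ : V ⊗ A ⟶ A ⊗ V) :
    (λ_ V).inv ≫ (η ▷ V) ≫ nabla η μ ψ = twistR η ψ := by
  rw [nabla_eq_nabWDL, nabWDL, hA.unit_mul_left]
  rfl

theorem mul_whiskerRight_nabWDL (hA : IsMonoid η μ) {B : C}
    (l : B ⊗ A ⟶ A ⊗ B) :
    (μ ▷ B) ≫ nabWDL η μ l
      = (α_ A A B).hom ≫ (A ◁ nabWDL η μ l) ≫ (α_ A A B).inv ≫ (μ ▷ B) := by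
  rw [nabWDL_eq_twistR]
  slice_lhs 1 2 => rw [← whisker_exchange]
  slice_lhs 2 3 => rw [associator_inv_naturality_left]
  slice_lhs 3 4 => rw [← comp_whiskerRight, hA.2.2]
  simp only [comp_whiskerRight, MonoidalCategory.whiskerLeft_comp,
    Category.assoc]
  monoidal

theorem preunit_eq_unit_twistR (hA : IsMonoid η μ) {B : C} (ηB : 𝟙_ C ⟶ B)
    (l : B ⊗ A ⟶ A ⊗ B) : preunit η ηB μ l = ηB ≫ twistR η l := by
  rw [preunit, nabWDL_eq_twistR, MonoidalCategory.tensorHom_def]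
  simp only [Category.assoc]
  slice_lhs 3 4 => rw [← MonoidalCategory.whiskerLeft_comp]
  simp only [Category.assoc]
  exact hA.unit_mul_left _

end IsMonoid

namespace WDL

variable {A B : C} {ηA : 𝟙_ C ⟶ A} {μA : A ⊗ A ⟶ A} {ηB : 𝟙_ C ⟶ B}
  {μB : B ⊗ B ⟶ B} {l : B ⊗ A ⟶ A ⊗ B}

theorem nabWDL_eq_twistL (hl : WDL ηB μB ηA μA l) :
    nabWDL ηA μA l = (twistL ηB l ▷ B) ≫ (α_ A B B).hom ≫ (A ◁ μB) :=
  hl.2.2.symm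

theorem comp_nabWDL (hA : IsMonoid ηA μA) (hl : WDL ηB μB ηA μA l) :
    l ≫ nabWDL ηA μA l = l := by
  calc l ≫ nabWDL ηA μA l
      = (ρ_ (B ⊗ A)).inv ≫ ((B ⊗ A) ◁ ηA) ≫ (l ▷ A) ≫ (α_ A B A).hom ≫
          (A ◁ l) ≫ (α_ A A B).inv ≫ (μA ▷ B) := by
        slice_rhs 1 3 => rw [rightUnitor_inv_whiskerLeft_whiskerRight]
        simp only [nabWDL, Category.assoc]
        congr 1
        monoidal
    _ = (ρ_ (B ⊗ A)).inv ≫ ((B ⊗ A) ◁ ηA) ≫ (α_ B A A).hom ≫ (B ◁ μA) ≫ l := by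
        rw [hl.2.1]; monoidal
    _ = l := by
        slice_lhs 2 3 => rw [associator_naturality_right]
        slice_lhs 3 4 => rw [← MonoidalCategory.whiskerLeft_comp, hA.2.1]
        monoidal

theorem twistR_comp_nabWDL (hA : IsMonoid ηA μA) (hl : WDL ηB μB ηA μA l) :
    twistR ηA l ≫ nabWDL ηA μA l = twistR ηA l := by
  simp only [twistR, Category.assoc, comp_nabWDL hA hl]

theorem nabWDL_idem (hA : IsMonoid ηA μA) (hl : WDL ηB μB ηA μA l) :
    nabWDL ηA μA l ≫ nabWDL ηA μA l = nabWDL ηA μA l := by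
  nth_rewrite 1 [nabWDL_eq_twistR]
  simp only [Category.assoc]
  rw [hA.mul_whiskerRight_nabWDL, Iso.inv_hom_id_assoc,
    ← MonoidalCategory.whiskerLeft_comp_assoc, twistR_comp_nabWDL hA hl,
    ← nabWDL_eq_twistR]

theorem mul_twistL (hl : WDL ηB μB ηA μA l) :
    μA ≫ twistL ηB l
      = (twistL ηB l ▷ A) ≫ (α_ A B A).hom ≫ (A ◁ l) ≫ (α_ A A B).inv ≫
          (μA ▷ B) := by
  calc μA ≫ twistL ηB l
      = (λ_ (A ⊗ A)).inv ≫ (ηB ▷ (A ⊗ A)) ≫ (B ◁ μA) ≫ l := by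
        rw [twistL, reassoc_of% leftUnitor_inv_whiskerRight_whiskerLeft]
    _ = (λ_ (A ⊗ A)).inv ≫ (ηB ▷ (A ⊗ A)) ≫ (α_ B A A).inv ≫ (l ▷ A) ≫
          (α_ A B A).hom ≫ (A ◁ l) ≫ (α_ A A B).inv ≫ (μA ▷ B) := by
        rw [hl.2.1]
    _ = _ := by
        slice_lhs 2 3 => rw [associator_inv_naturality_left]
        simp only [twistL, comp_whiskerRight, Category.assoc]
        monoidal

theorem twistR_eq_twistL (hA : IsMonoid ηA μA) (hl : WDL ηB μB ηA μA l) :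
    twistR ηA l
      = (λ_ B).inv ≫ ((ηA ≫ twistL ηB l) ▷ B) ≫ (α_ A B B).hom ≫ (A ◁ μB) := by
  conv_lhs => rw [← hA.unit_mul_left (twistR ηA l)]
  rw [← nabWDL_eq_twistR, nabWDL_eq_twistL hl]
  simp only [comp_whiskerRight, Category.assoc]

theorem mul_twistR (hA : IsMonoid ηA μA) (hB : IsMonoid ηB μB)
    (hl : WDL ηB μB ηA μA l) :
    μB ≫ twistR ηA l = (twistR ηA l ▷ B) ≫ (α_ A B B).hom ≫ (A ◁ μB) := by
  calc μB ≫ twistR ηA l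
      = (λ_ (B ⊗ B)).inv ≫ ((ηA ≫ twistL ηB l) ▷ (B ⊗ B)) ≫
          (α_ A B (B ⊗ B)).hom ≫ (A ◁ ((B ◁ μB) ≫ μB)) := by
        rw [twistR_eq_twistL hA hl, leftUnitor_inv_naturality_assoc]
        slice_lhs 2 3 => rw [whisker_exchange]
        slice_lhs 3 4 => rw [associator_naturality_right]
        simp only [MonoidalCategory.whiskerLeft_comp, Category.assoc]
    _ = (λ_ (B ⊗ B)).inv ≫ ((ηA ≫ twistL ηB l) ▷ (B ⊗ B)) ≫
          (α_ A B (B ⊗ B)).hom ≫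
          (A ◁ ((α_ B B B).inv ≫ (μB ▷ B) ≫ μB)) := by
        rw [hB.2.2, Iso.inv_hom_id_assoc]
    _ = (twistR ηA l ▷ B) ≫ (α_ A B B).hom ≫ (A ◁ μB) := by
        rw [twistR_eq_twistL hA hl]
        simp only [comp_whiskerRight, MonoidalCategory.whiskerLeft_comp,
          Category.assoc]
        slice_rhs 5 6 => rw [associator_naturality_middle]
        simp only [Category.assoc]
        monoidal

theorem preunit_eq_unit_twistL (hB : IsMonoid ηB μB) (hl : WDL ηB μB ηA μA l) :
    preunit ηA ηB μA l = ηA ≫ twistL ηB l := by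
  rw [preunit, nabWDL_eq_twistL hl, ← hB.unit_mul_right (ηA ≫ twistL ηB l),
    tensorHom_def']
  simp only [comp_whiskerRight, Category.assoc]
  monoidal

theorem twistL_whiskerRight_mul (hl : WDL ηB μB ηA μA l) (X : C) :
    (twistL ηB l ▷ (A ⊗ X)) ≫ (α_ A B (A ⊗ X)).hom ≫
        (A ◁ (α_ B A X).inv) ≫ (A ◁ (l ▷ X)) ≫ (A ◁ (α_ A B X).hom) ≫
        (α_ A A (B ⊗ X)).inv ≫ (μA ▷ (B ⊗ X))
      = (α_ A A X).inv ≫ (μA ▷ X) ≫ (twistL ηB l ▷ X) ≫ (α_ A B X).hom := by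
  calc _ = (α_ A A X).inv ≫ (((twistL ηB l ▷ A) ≫ (α_ A B A).hom ≫ (A ◁ l) ≫
          (α_ A A B).inv ≫ (μA ▷ B)) ▷ X) ≫ (α_ A B X).hom := by
        simp only [comp_whiskerRight, Category.assoc]
        monoidal
    _ = _ := by
        rw [← mul_twistL hl, comp_whiskerRight, Category.assoc]

theorem preunit_whiskerRight_mul (hA : IsMonoid ηA μA) (hB : IsMonoid ηB μB)
    (hl : WDL ηB μB ηA μA l) (X : C) :
    (λ_ (A ⊗ X)).inv ≫ (preunit ηA ηB μA l ▷ (A ⊗ X)) ≫ (α_ A B (A ⊗ X)).hom ≫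
        (A ◁ (α_ B A X).inv) ≫ (A ◁ (l ▷ X)) ≫ muPart B X μA
      = (twistL ηB l ▷ X) ≫ (α_ A B X).hom := by
  have hunit := hA.unit_mul_left (𝟙 (A ⊗ X))
  rw [MonoidalCategory.whiskerLeft_id, Category.id_comp] at hunit
  rw [preunit_eq_unit_twistL hB hl]
  simp only [muPart, comp_whiskerRight, Category.assoc]
  rw [twistL_whiskerRight_mul hl, reassoc_of% hunit]

theorem preunit_tensor_mul (hA : IsMonoid ηA μA) (hB : IsMonoid ηB μB)
    (hl : WDL ηB μB ηA μA l) {X : C} (x : 𝟙_ C ⟶ A ⊗ X) :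
    (λ_ (𝟙_ C)).inv ≫ (preunit ηA ηB μA l ⊗ₘ x) ≫ (α_ A B (A ⊗ X)).hom ≫
        (A ◁ (α_ B A X).inv) ≫ (A ◁ (l ▷ X)) ≫ muPart B X μA
      = x ≫ (twistL ηB l ▷ X) ≫ (α_ A B X).hom := by
  rw [tensorHom_def', Category.assoc, ← leftUnitor_inv_naturality_assoc,
    preunit_whiskerRight_mul hA hB hl]

theorem whiskerRight_mul_comp_eq_sigWDL (hA : IsMonoid ηA μA)
    (hl : WDL ηB μB ηA μA l) :
    (μB ▷ A) ≫ l
      = (α_ B B A).hom ≫ (B ◁ l) ≫ (α_ B A B).inv ≫ (l ▷ B) ≫ (α_ A B B).hom ≫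
          (A ◁ sigWDL ηA μB l) ≫ (α_ A A B).inv ≫ (μA ▷ B) := by
  calc (μB ▷ A) ≫ l
      = (α_ B B A).hom ≫ (B ◁ l) ≫ (α_ B A B).inv ≫
          ((l ≫ nabWDL ηA μA l) ▷ B) ≫ (α_ A B B).hom ≫ (A ◁ μB) := by
        rw [hl.1, comp_nabWDL hA hl]
    _ = _ := by
        simp only [sigWDL, nabWDL_eq_twistR, twistR, comp_whiskerRight,
          MonoidalCategory.whiskerLeft_comp, Category.assoc]
        slice_rhs 10 11 => rw [associator_inv_naturality_right]
        slice_rhs 11 12 => rw [whisker_exchange]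
        monoidal

end WDL

section ThreeMonoids

variable {S T D : C} {ηS : 𝟙_ C ⟶ S} {μS : S ⊗ S ⟶ S} {ηT : 𝟙_ C ⟶ T}
  {μT : T ⊗ T ⟶ T} {ηD : 𝟙_ C ⟶ D} {μD : D ⊗ D ⟶ D}
  {l1 : T ⊗ S ⟶ S ⊗ T} {l2 : D ⊗ T ⟶ T ⊗ D} {l3 : D ⊗ S ⟶ S ⊗ D}

namespace YB

theorem whiskerRight_psi2 (hyb : YB l1 l2 l3) :
    (l2 ▷ S) ≫ psi2 l1 l3 = psi2 l3 l1 ≫ (S ◁ l2) := by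
  simpa only [psi2, Category.assoc] using hyb.symm

theorem comp_twistR_psi2 (hyb : YB l1 l2 l3) :
    l2 ≫ twistR ηS (psi2 l1 l3) = twistR ηS (psi2 l3 l1) ≫ (S ◁ l2) := by
  rw [comp_twistR, hyb.whiskerRight_psi2, twistR]
  simp only [Category.assoc]

theorem twistL_twistR_psi2 (hyb : YB l1 l2 l3) :
    twistL ηD l2 ≫ twistR ηS (psi2 l1 l3)
      = twistR ηS l1 ≫ (twistL ηD l3 ▷ T) ≫ (α_ S D T).hom ≫ (S ◁ l2) := by
  rw [twistL, Category.assoc, Category.assoc, hyb.comp_twistR_psi2, twistR_psi2]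
  slice_lhs 2 3 => rw [← whisker_exchange]
  simp only [Category.assoc]
  rw [← leftUnitor_inv_naturality_assoc]
  congr 1
  simp only [twistL, comp_whiskerRight, Category.assoc]
  monoidal

theorem twistR_twistR_psi2 (hyb : YB l1 l2 l3) :
    twistR ηT l2 ≫ twistR ηS (psi2 l1 l3)
      = (ρ_ D).inv ≫ (D ◁ ηT) ≫ twistR ηS (psi2 l3 l1) ≫ (S ◁ l2) := by
  rw [twistR, Category.assoc, Category.assoc, hyb.comp_twistR_psi2]

end YB

theorem whiskerLeft_twistR_psi2_sigWDL (hS : IsMonoid ηS μS)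
    (h1 : WDL ηT μT ηS μS l1) :
    (T ◁ (twistR ηT l2 ≫ twistR ηS (psi2 l1 l3))) ≫ (α_ T S (T ⊗ D)).inv ≫
        (l1 ▷ (T ⊗ D)) ≫ (α_ S T (T ⊗ D)).hom ≫ (S ◁ (α_ T T D).inv) ≫
        (S ◁ (sigWDL ηS μT l1 ▷ D)) ≫ muPart T D μS
      = nabWDL ηT μT l2 ≫ twistR ηS (psi2 l1 l3) := by
  calc _ = (T ◁ twistR ηT l2) ≫ (T ◁ (T ◁ twistR ηS l3)) ≫
          (α_ T T (S ⊗ D)).inv ≫ (α_ (T ⊗ T) S D).inv ≫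
          (((α_ T T S).hom ≫ (T ◁ l1) ≫ (α_ T S T).inv ≫ (l1 ▷ T) ≫
            (α_ S T T).hom ≫ (S ◁ sigWDL ηS μT l1) ≫ (α_ S S T).inv ≫
            (μS ▷ T)) ▷ D) ≫ (α_ S T D).hom := by
        simp only [twistR_psi2, muPart, comp_whiskerRight,
          MonoidalCategory.whiskerLeft_comp, Category.assoc]
        monoidal
    _ = (T ◁ twistR ηT l2) ≫ (T ◁ (T ◁ twistR ηS l3)) ≫
          (α_ T T (S ⊗ D)).inv ≫ (α_ (T ⊗ T) S D).inv ≫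
          (((μT ▷ S) ≫ l1) ▷ D) ≫ (α_ S T D).hom := by
        rw [← WDL.whiskerRight_mul_comp_eq_sigWDL hS h1]
    _ = _ := by
        rw [nabWDL_eq_twistR, twistR_psi2]
        simp only [comp_whiskerRight, Category.assoc]
        slice_lhs 4 5 => rw [← associator_inv_naturality_left]
        slice_lhs 2 3 => rw [associator_inv_naturality_right]
        slice_lhs 3 4 => rw [whisker_exchange]
        monoidal

theorem iterPre1 (hS : IsMonoid ηS μS) (hT : IsMonoid ηT μT)
    (h1 : WDL ηT μT ηS μS l1) (h2 : WDL ηD μD ηT μT l2) (hyb : YB l1 l2 l3) :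
    IterPre1 ηS μS l1 (sigWDL ηS μT l1) l3 l2 (nabWDL ηT μT l2)
      (preunit ηS ηT μS l1) := by
  rw [IterPre1, hS.unit_nabla, twistR_psiVW]
  conv_rhs => rw [← WDL.nabWDL_idem hT h2, Category.assoc,
    ← whiskerLeft_twistR_psi2_sigWDL hS h1, hyb.twistR_twistR_psi2]
  rw [hS.preunit_eq_unit_twistR, MonoidalCategory.tensorHom_def,
    MonoidalCategory.tensorHom_def l1]
  simp only [Category.assoc]
  rw [← rightUnitor_inv_naturality_assoc]
  congr 1
  slice_lhs 8 9 => rw [← whisker_exchange]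
  simp only [twistR_psi2, MonoidalCategory.whiskerLeft_comp, Category.assoc]
  monoidal

theorem whiskerRight_sigWDL_comp_psi2 (hyb : YB l1 l2 l3) :
    (l2 ▷ D) ≫ (α_ T D D).hom ≫ (T ◁ sigWDL ηS μD l3) ≫ (α_ T S D).inv ≫
        (l1 ▷ D) ≫ (α_ S T D).hom
      = ((twistR ηS (psi2 l3 l1) ≫ (S ◁ l2)) ▷ D) ≫ (α_ S (T ⊗ D) D).hom ≫
          (S ◁ ((α_ T D D).hom ≫ (T ◁ μD))) := by
  calc _ = ((l2 ≫ twistR ηS (psi2 l1 l3)) ▷ D) ≫ (α_ S (T ⊗ D) D).hom ≫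
          (S ◁ ((α_ T D D).hom ≫ (T ◁ μD))) := by
        simp only [sigWDL_eq_twistR, twistR_psi2, comp_whiskerRight,
          MonoidalCategory.whiskerLeft_comp, Category.assoc]
        slice_lhs 5 6 => rw [associator_inv_naturality_right]
        slice_lhs 6 7 => rw [whisker_exchange]
        monoidal
    _ = _ := by rw [hyb.comp_twistR_psi2]

theorem preunit_whiskerRight_sigWDL (hS : IsMonoid ηS μS) (hD : IsMonoid ηD μD)
    (h3 : WDL ηD μD ηS μS l3) (hyb : YB l1 l2 l3) :
    (λ_ (T ⊗ D)).inv ≫ (preunit ηS ηD μS l3 ▷ (T ⊗ D)) ≫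
        (α_ S D (T ⊗ D)).hom ≫ (S ◁ (α_ D T D).inv) ≫ (S ◁ (l2 ▷ D)) ≫
        (S ◁ (α_ T D D).hom) ≫ (S ◁ (T ◁ sigWDL ηS μD l3)) ≫
        (S ◁ (α_ T S D).inv) ≫ (S ◁ (l1 ▷ D)) ≫ muPart T D μS
      = ((twistR ηS l1 ≫ (twistL ηD l3 ▷ T) ≫ (α_ S D T).hom ≫ (S ◁ l2)) ▷ D) ≫
          (α_ S (T ⊗ D) D).hom ≫ (S ◁ ((α_ T D D).hom ≫ (T ◁ μD))) := by
  set p := preunit ηS ηD μS l3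
  calc _ = (λ_ (T ⊗ D)).inv ≫ (p ▷ (T ⊗ D)) ≫ (α_ S D (T ⊗ D)).hom ≫
        (S ◁ ((α_ D T D).inv ≫ (l2 ▷ D) ≫ (α_ T D D).hom ≫
          (T ◁ sigWDL ηS μD l3) ≫ (α_ T S D).inv ≫ (l1 ▷ D) ≫ (α_ S T D).hom)) ≫
        (α_ S S (T ⊗ D)).inv ≫ (μS ▷ (T ⊗ D)) := by
        simp only [muPart, MonoidalCategory.whiskerLeft_comp, Category.assoc]
    _ = (λ_ (T ⊗ D)).inv ≫ (p ▷ (T ⊗ D)) ≫ (α_ S D (T ⊗ D)).hom ≫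
        (S ◁ ((α_ D T D).inv ≫
          ((twistR ηS (psi2 l3 l1) ≫ (S ◁ l2)) ▷ D) ≫ (α_ S (T ⊗ D) D).hom ≫
          (S ◁ ((α_ T D D).hom ≫ (T ◁ μD))))) ≫
        (α_ S S (T ⊗ D)).inv ≫ (μS ▷ (T ⊗ D)) := by
        rw [whiskerRight_sigWDL_comp_psi2 hyb]
    _ = (twistR ηS l1 ▷ D) ≫ (α_ S T D).hom ≫
        ((λ_ (S ⊗ (T ⊗ D))).inv ≫ (p ▷ (S ⊗ (T ⊗ D))) ≫
          (α_ S D (S ⊗ (T ⊗ D))).hom ≫ (S ◁ (α_ D S (T ⊗ D)).inv) ≫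
          (S ◁ (l3 ▷ (T ⊗ D))) ≫ muPart D (T ⊗ D) μS) ≫
        (S ◁ ((α_ D T D).inv ≫ (l2 ▷ D) ≫ (α_ T D D).hom ≫ (T ◁ μD))) := by
        have hmove := reassoc_of% leftUnitor_inv_whiskerRight_whiskerLeft
          ((twistR ηS l1 ▷ D) ≫ (α_ S T D).hom) p
        simp only [Category.assoc] at hmove ⊢
        rw [← hmove]
        simp only [muPart, Category.assoc]
        rw [← whisker_exchange μS
          ((α_ D T D).inv ≫ (l2 ▷ D) ≫ (α_ T D D).hom ≫ (T ◁ μD))]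
        simp only [twistR_psi2, MonoidalCategory.whiskerLeft_comp,
          comp_whiskerRight, Category.assoc]
        monoidal
    _ = _ := by
        rw [WDL.preunit_whiskerRight_mul hS hD h3]
        simp only [MonoidalCategory.whiskerLeft_comp, comp_whiskerRight,
          Category.assoc]
        monoidal

theorem nabWDL_twistR_psi2_eq_twistL (hS : IsMonoid ηS μS) (hD : IsMonoid ηD μD)
    (h2 : WDL ηD μD ηT μT l2) (h3 : WDL ηD μD ηS μS l3) :
    nabWDL ηT μT l2 ≫ twistR ηS (psi2 l1 l3)
      = ((twistL ηD l2 ≫ twistR ηS (psi2 l1 l3)) ▷ D) ≫ (α_ S (T ⊗ D) D).hom ≫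
          (S ◁ ((α_ T D D).hom ≫ (T ◁ μD))) := by
  rw [WDL.nabWDL_eq_twistL h2, twistR_psi2]
  simp only [Category.assoc]
  rw [← MonoidalCategory.whiskerLeft_comp_assoc, WDL.mul_twistR hS hD h3]
  simp only [comp_whiskerRight, MonoidalCategory.whiskerLeft_comp,
    Category.assoc]
  slice_lhs 5 6 => rw [associator_inv_naturality_right]
  slice_lhs 6 7 => rw [whisker_exchange]
  simp only [Category.assoc]
  monoidal

theorem iterPre2 (hS : IsMonoid ηS μS) (hD : IsMonoid ηD μD)
    (h2 : WDL ηD μD ηT μT l2) (h3 : WDL ηD μD ηS μS l3) (hyb : YB l1 l2 l3) :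
    IterPre2 ηS μS l1 l3 (sigWDL ηS μD l3) l2 (nabWDL ηT μT l2)
      (preunit ηS ηD μS l3) := by
  rw [IterPre2, hS.unit_nabla, twistR_psiVW,
    nabWDL_twistR_psi2_eq_twistL hS hD h2 h3, hyb.twistL_twistR_psi2]
  exact preunit_whiskerRight_sigWDL hS hD h3 hyb

theorem nabWDL_twistR_psi2 (h1 : WDL ηT μT ηS μS l1) :
    nabWDL ηT μT l2 ≫ twistR ηS (psi2 l1 l3)
      = (T ◁ (twistR ηT l2 ≫ twistR ηS (psi2 l1 l3))) ≫ (α_ T S (T ⊗ D)).inv ≫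
          (l1 ▷ (T ⊗ D)) ≫ (α_ S T (T ⊗ D)).hom ≫
          (S ◁ ((α_ T T D).inv ≫ (μT ▷ D))) := by
  rw [nabWDL_eq_twistR, twistR_psi2]
  simp only [Category.assoc]
  slice_lhs 3 4 => rw [← whisker_exchange]
  slice_lhs 4 5 => rw [associator_inv_naturality_left]
  slice_lhs 5 6 => rw [← comp_whiskerRight, h1.1]
  simp only [comp_whiskerRight, MonoidalCategory.whiskerLeft_comp,
    Category.assoc]
  monoidal

theorem twistL_whiskerRight_nabla_psiVW (h1 : WDL ηT μT ηS μS l1) :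
    (twistL ηT l1 ▷ D) ≫ (α_ S T D).hom ≫
        nabla ηS μS (psiVW l1 l3 (nabWDL ηT μT l2))
      = (S ◁ (twistR ηT l2 ≫ twistR ηS (psi2 l1 l3))) ≫
          (α_ S S (T ⊗ D)).inv ≫ (μS ▷ (T ⊗ D)) ≫ (α_ S T D).inv ≫
          (nabWDL ηS μS l1 ▷ D) ≫ (α_ S T D).hom := by
  rw [nabla_eq_nabWDL, nabWDL_eq_twistR, twistR_psiVW, nabWDL_twistR_psi2 h1]
  set k := twistR ηT l2 ≫ twistR ηS (psi2 l1 l3)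
  calc _ = (S ◁ k) ≫ ((twistL ηT l1 ▷ (S ⊗ (T ⊗ D))) ≫
          (α_ S T (S ⊗ (T ⊗ D))).hom ≫ (S ◁ (α_ T S (T ⊗ D)).inv) ≫
          (S ◁ (l1 ▷ (T ⊗ D))) ≫ (S ◁ (α_ S T (T ⊗ D)).hom) ≫
          (α_ S S (T ⊗ (T ⊗ D))).inv ≫ (μS ▷ (T ⊗ (T ⊗ D)))) ≫
        (S ◁ ((α_ T T D).inv ≫ (μT ▷ D))) := by
        simp only [Category.assoc]
        rw [whisker_exchange_assoc (twistL ηT l1) k,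
          ← whisker_exchange μS ((α_ T T D).inv ≫ (μT ▷ D))]
        simp only [MonoidalCategory.whiskerLeft_comp, Category.assoc]
        monoidal
    _ = _ := by
        rw [WDL.twistL_whiskerRight_mul h1, WDL.nabWDL_eq_twistL h1]
        simp only [comp_whiskerRight, MonoidalCategory.whiskerLeft_comp,
          Category.assoc]
        monoidal

theorem twistR_psi2_comp_nabWDL (hS : IsMonoid ηS μS) (h1 : WDL ηT μT ηS μS l1) :
    twistR ηS (psi2 l1 l3) ≫ (α_ S T D).inv ≫ (nabWDL ηS μS l1 ▷ D) ≫
        (α_ S T D).hom = twistR ηS (psi2 l1 l3) := by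
  rw [twistR_psi2]
  simp only [Category.assoc, Iso.hom_inv_id_assoc]
  rw [← comp_whiskerRight_assoc, WDL.comp_nabWDL hS h1]

theorem nuVW_preunit_eq (hS : IsMonoid ηS μS) (hT : IsMonoid ηT μT)
    (hD : IsMonoid ηD μD) (h1 : WDL ηT μT ηS μS l1) (h3 : WDL ηD μD ηS μS l3)
    (hyb : YB l1 l2 l3) :
    nuVW ηS μS l1 l3 (nabWDL ηT μT l2) (preunit ηS ηT μS l1)
        (preunit ηS ηD μS l3)
      = (λ_ (𝟙_ C)).inv ≫ (((λ_ (𝟙_ C)).inv ≫ (ηD ⊗ₘ ηT)) ⊗ₘ ηS) ≫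
          (l2 ▷ S) ≫ (α_ T D S).hom ≫ (T ◁ l3) ≫ (α_ T S D).inv ≫
          (l1 ▷ D) ≫ (α_ S T D).hom := by
  calc _ = preunit ηS ηD μS l3 ≫ (twistL ηT l1 ▷ D) ≫ (α_ S T D).hom ≫
        nabla ηS μS (psiVW l1 l3 (nabWDL ηT μT l2)) := by
        rw [nuVW, reassoc_of% WDL.preunit_tensor_mul hS hT h1]
    _ = ((λ_ (𝟙_ C)).inv ≫ (preunit ηS ηD μS l3 ⊗ₘ preunit ηS ηT μS l1) ≫
          (α_ S D (S ⊗ T)).hom ≫ (S ◁ (α_ D S T).inv) ≫ (S ◁ (l3 ▷ T)) ≫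
          muPart D T μS) ≫ (S ◁ l2) ≫ (α_ S T D).inv ≫
          (nabWDL ηS μS l1 ▷ D) ≫ (α_ S T D).hom := by
        rw [twistL_whiskerRight_nabla_psiVW h1, hyb.twistR_twistR_psi2,
          hS.preunit_eq_unit_twistR ηT l1, MonoidalCategory.tensorHom_def,
          unitors_inv_equal]
        simp only [muPart, Category.assoc]
        rw [← rightUnitor_inv_naturality_assoc, ← whisker_exchange_assoc μS l2]
        congr 1
        simp only [twistR_psi2, MonoidalCategory.whiskerLeft_comp, Category.assoc]
        monoidal
    _ = ηT ≫ twistL ηD l2 ≫ twistR ηS (psi2 l1 l3) := by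
        rw [WDL.preunit_tensor_mul hS hD h3, hS.preunit_eq_unit_twistR]
        simp only [Category.assoc]
        rw [← reassoc_of% hyb.twistL_twistR_psi2, twistR_psi2_comp_nabWDL hS h1]
    _ = _ := by
        have hunits :
            ηT ≫ twistL ηD l2 = ((λ_ (𝟙_ C)).inv ≫ (ηD ⊗ₘ ηT)) ≫ l2 := by
          rw [twistL, tensorHom_def', leftUnitor_inv_naturality_assoc]
          simp only [Category.assoc]
        rw [← Category.assoc, hunits, comp_twistR, tensorHom_def' _ ηS,
          unitors_inv_equal]
        simp only [comp_whiskerRight, Category.assoc]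
        rfl

end ThreeMonoids

theorem statement18 {S T D : C} (ηS : 𝟙_ C ⟶ S) (μS : S ⊗ S ⟶ S)
    (ηT : 𝟙_ C ⟶ T) (μT : T ⊗ T ⟶ T) (ηD : 𝟙_ C ⟶ D) (μD : D ⊗ D ⟶ D)
    (hS : IsMonoid ηS μS) (hT : IsMonoid ηT μT) (hD : IsMonoid ηD μD)
    (l1 : T ⊗ S ⟶ S ⊗ T) (l2 : D ⊗ T ⟶ T ⊗ D) (l3 : D ⊗ S ⟶ S ⊗ D)
    (h1 : WDL ηT μT ηS μS l1) (h2 : WDL ηD μD ηT μT l2)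
    (h3 : WDL ηD μD ηS μS l3) (hyb : YB l1 l2 l3) :
    IterPre1 ηS μS l1 (sigWDL ηS μT l1) l3 l2 (nabWDL ηT μT l2)
        ((λ_ (𝟙_ C)).inv ≫ (ηS ⊗ₘ ηT) ≫ nabWDL ηS μS l1) ∧
      IterPre2 ηS μS l1 l3 (sigWDL ηS μD l3) l2 (nabWDL ηT μT l2)
        ((λ_ (𝟙_ C)).inv ≫ (ηS ⊗ₘ ηD) ≫ nabWDL ηS μS l3) ∧
      nuVW ηS μS l1 l3 (nabWDL ηT μT l2)
          ((λ_ (𝟙_ C)).inv ≫ (ηS ⊗ₘ ηT) ≫ nabWDL ηS μS l1)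
          ((λ_ (𝟙_ C)).inv ≫ (ηS ⊗ₘ ηD) ≫ nabWDL ηS μS l3)
        = (λ_ (𝟙_ C)).inv ≫ (((λ_ (𝟙_ C)).inv ≫ (ηD ⊗ₘ ηT)) ⊗ₘ ηS) ≫
            (l2 ▷ S) ≫ (α_ T D S).hom ≫ (T ◁ l3) ≫ (α_ T S D).inv ≫
            (l1 ▷ D) ≫ (α_ S T D).hom := by
  exact ⟨iterPre1 hS hT h1 h2 hyb, iterPre2 hS hD h2 h3 hyb,
    nuVW_preunit_eq hS hT hD h1 h3 hyb⟩

end IteratedWCP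
end
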